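/- arXiv:2501.04348 — 3 statements merged into one kernel-verified Lean document; each statement's English description precedes it below -/
import Mathlib

section
/- (Off-diagonal oscillatory integral bound from the proof of Lemma 4.1) Let ε ∈ (0,1/6), T ≥ 2, Δ ∈ [1, T^{1/2−2ε}], and let V₂ : ℝ → ℂ be smooth, supported in [1,2], with |V₂^{(j)}(ξ)| ≤ A_j·Δ^j for all j ≥ 0. Then for all positive integers m, n, k with m ≠ n·k and m ≤ T^{1/2+ε}, and for every A > 0, there is a constant c_A (depending only on A, ε, and finitely many of the A_j) such that |∫_ℝ V₂(ξ)·e^{i·T·ξ·log(m/(n·k))} dξ| ≤ c_A·T^{−A}. -/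
open Complex Real MeasureTheory

/-- Off-diagonal oscillatory integral bound from the proof of Lemma 4.1. -/
theorem stmt_15 (ε : ℝ) (hε : 0 < ε) (hε' : ε < 1/6) (Aco : ℕ → ℝ)
    (A : ℝ) (hA : 0 < A) :
    ∃ cA : ℝ, ∀ T : ℝ, 2 ≤ T → ∀ Δ : ℝ, 1 ≤ Δ → Δ ≤ T ^ (1/2 - 2*ε) →
      ∀ V₂ : ℝ → ℂ, ContDiff ℝ (⊤ : ℕ∞) V₂ →
        (∀ ξ : ℝ, ξ ∉ Set.Icc (1:ℝ) 2 → V₂ ξ = 0) →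
        (∀ (j : ℕ) (ξ : ℝ), ‖iteratedDeriv j V₂ ξ‖ ≤ Aco j * Δ ^ j) →
      ∀ m n k : ℕ, 0 < m → 0 < n → 0 < k → m ≠ n * k → (m : ℝ) ≤ T ^ (1/2 + ε) →
      ‖∫ ξ : ℝ, V₂ ξ *
          Complex.exp (I * T * ξ * Real.log ((m : ℝ) / ((n : ℝ) * k)))‖
        ≤ cA * T ^ (-A) := by
  set j : ℕ := ⌈A / ε⌉₊ with hjdef
  refine ⟨|Aco j| * 2 ^ j, ?_⟩
  intro T hT Δ hΔ1 hΔT V₂ hV₂ hsupp hder m n k hm hn hk hmnk hmT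
  have hT0 : (0:ℝ) < T := by linarith
  have hT1 : (1:ℝ) ≤ T := by linarith
  have hm1 : (1:ℝ) ≤ (m:ℝ) := by exact_mod_cast hm
  have hq0 : (0:ℝ) < (n:ℝ) * k := by positivity
  set L : ℝ := Real.log ((m:ℝ) / ((n:ℝ) * k)) with hLdef
  -- lower bound on |L|
  have hLlow : 1 / (2 * (m:ℝ)) ≤ |L| := by
    rcases lt_or_gt_of_ne hmnk with hlt | hgt
    · -- m < n*k
      have hq : (m:ℝ) + 1 ≤ (n:ℝ) * k := by exact_mod_cast Nat.succ_le_of_lt hlt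
      have hx : (0:ℝ) < ((n:ℝ) * k) / (m:ℝ) := by positivity
      have h1 : 1 - (((n:ℝ) * k) / (m:ℝ))⁻¹ ≤ Real.log (((n:ℝ) * k) / (m:ℝ)) :=
        Real.one_sub_inv_le_log_of_pos hx
      have h2 : (((n:ℝ) * k) / (m:ℝ))⁻¹ = (m:ℝ) / ((n:ℝ) * k) := by rw [inv_div]
      have h3 : (m:ℝ) / ((n:ℝ) * k) ≤ (m:ℝ) / ((m:ℝ) + 1) := by
        apply div_le_div_of_nonneg_left (by positivity) (by positivity) hq
      have h4 : 1 / (2 * (m:ℝ)) ≤ 1 - (m:ℝ) / ((m:ℝ) + 1) := by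
        rw [div_le_iff₀ (by positivity)]
        have : 1 - (m:ℝ) / ((m:ℝ) + 1) = 1 / ((m:ℝ) + 1) := by
          field_simp
          ring
        rw [this, div_mul_eq_mul_div, le_div_iff₀ (by positivity)]
        nlinarith
      have hLneg : L = - Real.log (((n:ℝ) * k) / (m:ℝ)) := by
        rw [hLdef, ← Real.log_inv, inv_div]
      have : 1 / (2 * (m:ℝ)) ≤ -L := by
        rw [hLneg, neg_neg]
        calc 1 / (2 * (m:ℝ)) ≤ 1 - (m:ℝ) / ((m:ℝ) + 1) := h4
          _ ≤ 1 - (((n:ℝ) * k) / (m:ℝ))⁻¹ := by rw [h2]; linarith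
          _ ≤ _ := h1
      exact this.trans (neg_le_abs L)
    · -- n*k < m
      have hq : (n:ℝ) * k + 1 ≤ (m:ℝ) := by exact_mod_cast Nat.succ_le_of_lt hgt
      have hx : (0:ℝ) < (m:ℝ) / ((n:ℝ) * k) := by positivity
      have h1 : 1 - ((m:ℝ) / ((n:ℝ) * k))⁻¹ ≤ L :=
        Real.one_sub_inv_le_log_of_pos hx
      have h2 : ((m:ℝ) / ((n:ℝ) * k))⁻¹ = ((n:ℝ) * k) / (m:ℝ) := by rw [inv_div]
      have h4 : 1 / (2 * (m:ℝ)) ≤ 1 - ((n:ℝ) * k) / (m:ℝ) := by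
        have hnk : ((n:ℝ) * k) / (m:ℝ) ≤ ((m:ℝ) - 1) / (m:ℝ) := by
          apply div_le_div_of_nonneg_right (by linarith) (by linarith) |>.trans_eq rfl
        have : 1 - ((m:ℝ) - 1) / (m:ℝ) = 1 / (m:ℝ) := by field_simp; ring
        have h5 : 1 / (2 * (m:ℝ)) ≤ 1 / (m:ℝ) := by
          apply div_le_div_of_nonneg_left one_pos.le (by linarith) (by linarith)
        linarith
      have : 1 / (2 * (m:ℝ)) ≤ L := by
        calc 1 / (2 * (m:ℝ)) ≤ 1 - ((m:ℝ) / ((n:ℝ) * k))⁻¹ := by rw [h2]; linarith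
          _ ≤ L := h1
      exact this.trans (le_abs_self L)
  set lam : ℝ := T * L with hlamdef
  have hlamlow : T ^ ((1:ℝ)/2 - ε) / 2 ≤ |lam| := by
    have h1 : |lam| = T * |L| := by
      rw [hlamdef, abs_mul, abs_of_pos hT0]
    have hmle : (m:ℝ) ≤ T ^ ((1:ℝ)/2 + ε) := hmT
    have hTp : T ^ ((1:ℝ)/2 - ε) = T / T ^ ((1:ℝ)/2 + ε) := by
      rw [show ((1:ℝ)/2 - ε) = 1 - (1/2 + ε) by ring, Real.rpow_sub hT0, Real.rpow_one]
    rw [h1, hTp]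
    have h2 : 1 / (2 * T ^ ((1:ℝ)/2 + ε)) ≤ 1 / (2 * (m:ℝ)) :=
      one_div_le_one_div_of_le (by positivity) (by linarith)
    calc T / T ^ ((1:ℝ)/2 + ε) / 2 = T * (1 / (2 * T ^ ((1:ℝ)/2 + ε))) := by ring
      _ ≤ T * (1 / (2 * (m:ℝ))) := mul_le_mul_of_nonneg_left h2 hT0.le
      _ ≤ T * |L| := mul_le_mul_of_nonneg_left hLlow hT0.le
  have hlam0 : lam ≠ 0 := by
    intro h
    have hP : (0:ℝ) < T ^ ((1:ℝ)/2 - ε) / 2 := by positivity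
    rw [h, abs_zero] at hlamlow; linarith
  -- support facts
  have htsupp : tsupport V₂ ⊆ Set.Icc (1:ℝ) 2 := by
    apply closure_minimal _ isClosed_Icc
    intro x hx
    by_contra hxn
    exact hx (hsupp x hxn)
  have hgsupp : ∀ (nn : ℕ) (x : ℝ), x ∉ Set.Icc (1:ℝ) 2 → iteratedDeriv nn V₂ x = 0 := by
    intro nn x hx
    have hxn : x ∉ tsupport (iteratedFDeriv ℝ nn V₂) :=
      fun hmem => hx (htsupp (tsupport_iteratedFDeriv_subset nn hmem))
    rw [iteratedDeriv_eq_iteratedFDeriv, image_eq_zero_of_notMem_tsupport hxn]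
    rfl
  have hint : ∀ nn : ℕ, Integrable (iteratedDeriv nn V₂) := by
    intro nn
    exact (hV₂.continuous_iteratedDeriv nn (by exact_mod_cast le_top)).integrable_of_hasCompactSupport
      (HasCompactSupport.intro isCompact_Icc (hgsupp nn))
  -- Fourier transform identification
  set w : ℝ := -(lam / (2 * π)) with hwdef
  have hpi : (0:ℝ) < π := Real.pi_pos
  have h2pw : 2 * π * w = -lam := by
    rw [hwdef]; field_simp
  have hIeq : (∫ ξ : ℝ, V₂ ξ * Complex.exp (I * T * ξ * L)) = FourierTransform.fourier V₂ w := by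
    rw [Real.fourier_real_eq_integral_exp_smul]
    congr 1
    ext v
    rw [smul_eq_mul, mul_comm]
    congr 1
    have harg : (-2 * π * v * w : ℝ) = T * v * L := by
      have : (-2) * π * v * w = v * -(2 * π * w) := by ring
      rw [this, h2pw, hlamdef]; ring
    rw [harg]
    push_cast
    ring_nf
  -- integration by parts via Fourier transform of iterated derivative
  have key := Real.fourier_iteratedDeriv (f := V₂) (N := (⊤ : ℕ∞)) (n := j)
    (hV₂.of_le (by simp)) (fun nn _ => hint nn) le_top
  have hnorm : ‖FourierTransform.fourier (iteratedDeriv j V₂) w‖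
      = |lam| ^ j * ‖FourierTransform.fourier V₂ w‖ := by
    rw [key]
    simp only [norm_smul, norm_pow]
    congr 2
    have : (2 * ↑π * I * ↑w : ℂ) = ((2 * π * w : ℝ) : ℂ) * I := by push_cast; ring
    rw [this, h2pw]
    simp [Complex.norm_real]
  have hFbound : ‖FourierTransform.fourier (iteratedDeriv j V₂) w‖ ≤ Aco j * Δ ^ j := by
    refine (VectorFourier.norm_fourierIntegral_le_integral_norm _ _ _ _ _).trans ?_
    have heq : (∫ x : ℝ, ‖iteratedDeriv j V₂ x‖)
        = ∫ x in Set.Icc (1:ℝ) 2, ‖iteratedDeriv j V₂ x‖ := by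
      rw [setIntegral_eq_integral_of_forall_compl_eq_zero]
      intro x hx
      rw [hgsupp j x hx, norm_zero]
    rw [heq]
    calc (∫ x in Set.Icc (1:ℝ) 2, ‖iteratedDeriv j V₂ x‖)
        ≤ ∫ _x in Set.Icc (1:ℝ) 2, (Aco j * Δ ^ j) := by
          apply setIntegral_mono_on ((hint j).norm.integrableOn)
            (integrableOn_const (by simp [Real.volume_Icc]))
            measurableSet_Icc
          intro x _
          exact hder j x
      _ = Aco j * Δ ^ j := by
          rw [setIntegral_const]
          simp [Real.volume_Icc]
          norm_num
  -- put everything together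
  have hX : ‖FourierTransform.fourier V₂ w‖ * |lam| ^ j ≤ Aco j * Δ ^ j := by
    rw [mul_comm, ← hnorm]; exact hFbound
  set X : ℝ := ‖FourierTransform.fourier V₂ w‖ with hXdef
  have hP0 : (0:ℝ) < T ^ ((1:ℝ)/2 - ε) / 2 := by positivity
  have hPj : (0:ℝ) < (T ^ ((1:ℝ)/2 - ε) / 2) ^ j := by positivity
  have hXP : X * (T ^ ((1:ℝ)/2 - ε) / 2) ^ j ≤ |Aco j| * (T ^ ((1:ℝ)/2 - 2*ε)) ^ j := by
    calc X * (T ^ ((1:ℝ)/2 - ε) / 2) ^ j ≤ X * |lam| ^ j := by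
          gcongr
      _ ≤ Aco j * Δ ^ j := hX
      _ ≤ |Aco j| * (T ^ ((1:ℝ)/2 - 2*ε)) ^ j := by
          apply mul_le_mul (le_abs_self _) _ (by positivity) (abs_nonneg _)
          exact pow_le_pow_left₀ (by linarith) hΔT j
  have hXfin : X ≤ |Aco j| * 2 ^ j * T ^ (-(ε * j)) := by
    rw [← le_div_iff₀ hPj] at hXP
    refine hXP.trans (le_of_eq ?_)
    rw [div_eq_iff hPj.ne']
    have hTne : T ^ ((1:ℝ)/2 - ε) ≠ 0 := by positivity
    have hsplit : T ^ ((1:ℝ)/2 - 2*ε) = T ^ (-ε) * T ^ ((1:ℝ)/2 - ε) := by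
      rw [← Real.rpow_add hT0]; ring_nf
    have hTm : (T ^ (-ε)) ^ j = T ^ (-(ε * j)) := by
      rw [← Real.rpow_natCast (T ^ (-ε)) j, ← Real.rpow_mul hT0.le]
      ring_nf
    calc |Aco j| * (T ^ ((1:ℝ)/2 - 2*ε)) ^ j
        = |Aco j| * 2 ^ j * (T ^ (-ε)) ^ j * (T ^ ((1:ℝ)/2 - ε) / 2) ^ j := by
          rw [hsplit, mul_pow, div_pow]
          field_simp
      _ = |Aco j| * 2 ^ j * T ^ (-(ε * j)) * (T ^ ((1:ℝ)/2 - ε) / 2) ^ j := by rw [hTm]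
  have hAεj : A ≤ ε * j := by
    have h1 : A / ε ≤ (j : ℝ) := Nat.le_ceil (A / ε)
    calc A = ε * (A / ε) := by field_simp
      _ ≤ ε * j := mul_le_mul_of_nonneg_left h1 hε.le
  have hTexp : T ^ (-(ε * (j:ℝ))) ≤ T ^ (-A) :=
    Real.rpow_le_rpow_of_exponent_le hT1 (by linarith)
  have habs : ‖∫ ξ : ℝ, V₂ ξ * Complex.exp (I * T * ξ * L)‖ = X := by
    rw [hIeq]
  rw [habs]
  calc X ≤ |Aco j| * 2 ^ j * T ^ (-(ε * j)) := hXfin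
    _ ≤ |Aco j| * 2 ^ j * T ^ (-A) := by
        apply mul_le_mul_of_nonneg_left hTexp (by positivity)
end

section
/- (Key oscillatory integral bound for Lemma 4.3) Let ε ∈ (0,1/8). There exists T₀ (depending on ε) such that for all T ≥ T₀, all Δ ∈ [1, T^{1/2−ε}], every smooth V₂ : ℝ → ℂ supported in [1,2] with |V₂^{(j)}(ξ)| ≤ A_j·Δ^j for all j ≥ 0, all positive integers m, n, k with n ≤ T^{1+ε} and m ≤ T^{1/2+ε}, and every A > 0, there is a constant c_A (depending only on A, ε, and finitely many of the A_j) such that |∫_ℝ V₂(ξ)·e^{−i·T·ξ·log(T²·ξ²·k/(4π²·e²·m·n))} dξ| ≤ c_A·T^{−A}. -/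
open Complex Real MeasureTheory

noncomputable section
namespace Osc

def S : Set ℝ := Set.Ioi (1/2)

lemma isOpen_S : IsOpen S := isOpen_Ioi
lemma Icc_subset_S : Set.Icc (1:ℝ) 2 ⊆ S := fun x hx => by
  simp only [S, Set.mem_Ioi]; linarith [hx.1]
lemma uniqueDiffOn_S : UniqueDiffOn ℝ S := isOpen_S.uniqueDiffOn

def u (r ξ : ℝ) : ℝ := Real.log (r * ξ^2) + 2

lemma u_pos {r : ℝ} (hr0 : 0 < r) (hr : 1 ≤ Real.log r) {ξ : ℝ} (hξ : ξ ∈ S) :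
    1 ≤ u r ξ := by
  have hξ' : (1/2 : ℝ) < ξ := hξ
  have h0 : (0:ℝ) < ξ := by linarith
  have : Real.log (r * ξ^2) = Real.log r + 2 * Real.log ξ := by
    rw [Real.log_mul (ne_of_gt hr0) (by positivity), Real.log_pow]; push_cast; ring
  have hlogξ : Real.log (1/2) ≤ Real.log ξ := Real.log_le_log (by norm_num) (le_of_lt hξ')
  have h2 : Real.log (1/2) = -Real.log 2 := by
    rw [one_div, Real.log_inv]
  have hl2 : Real.log 2 < 0.6931471808 := Real.log_two_lt_d9
  simp only [u, this]
  nlinarith [hlogξ, hl2]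

lemma u_ge {r : ℝ} (hr0 : 0 < r) {ξ : ℝ} (hξ : ξ ∈ Set.Icc (1:ℝ) 2) :
    Real.log r + 2 ≤ u r ξ := by
  have h1 : (1:ℝ) ≤ ξ := hξ.1
  have : Real.log r ≤ Real.log (r * ξ^2) := by
    apply Real.log_le_log hr0
    have h2 : 1 ≤ ξ^2 := by nlinarith
    nlinarith
  simp only [u]; linarith

lemma u_hasDerivAt {r : ℝ} (hr0 : 0 < r) {ξ : ℝ} (hξ : ξ ∈ S) :
    HasDerivAt (u r) (2/ξ) ξ := by
  have hξ' : (0:ℝ) < ξ := lt_trans (by norm_num) hξ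
  have h1 : HasDerivAt (fun ξ : ℝ => r * ξ^2) (r * (2 * ξ)) ξ := by
    simpa using ((hasDerivAt_pow 2 ξ).const_mul r)
  have h2 := (h1.log (by positivity))
  have : r * (2*ξ) / (r * ξ^2) = 2/ξ := by field_simp
  rw [this] at h2
  exact h2.add_const 2

lemma u_contDiffOn {r : ℝ} (hr0 : 0 < r) : ContDiffOn ℝ (⊤ : ℕ∞) (u r) S := by
  apply ContDiffOn.add _ contDiffOn_const
  apply ContDiffOn.log
  · exact (contDiffOn_const.mul (contDiffOn_id.pow 2))
  · intro x hx
    have : (0:ℝ) < x := lt_trans (by norm_num) hx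
    positivity


def p (r T ξ : ℝ) : ℂ := Complex.I / (T * (u r ξ : ℝ))





lemma term_hasDerivAt {r : ℝ} (hr0 : 0 < r) (hr : 1 ≤ Real.log r) (a : ℝ) (k j : ℕ)
    (hj : 1 ≤ j) {ξ : ℝ} (hξ : ξ ∈ S) :
    HasDerivAt (fun x : ℝ => a * (x^k)⁻¹ * ((u r x)^j)⁻¹)
      ( (-(k*a)) * (ξ^(k+1))⁻¹ * ((u r ξ)^j)⁻¹
        + (-(2*j*a)) * (ξ^(k+1))⁻¹ * ((u r ξ)^(j+1))⁻¹ ) ξ := by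
  have hξR : (1/2:ℝ) < ξ := hξ
  have hx0 : ξ ≠ 0 := by positivity
  have hu1 : 1 ≤ u r ξ := u_pos hr0 hr hξ
  have hu0 : u r ξ ≠ 0 := by linarith
  have hxki := (hasDerivAt_pow k ξ).inv (pow_ne_zero _ hx0)
  have huji := ((u_hasDerivAt hr0 hξ).pow j).inv (pow_ne_zero _ hu0)
  have h := (hxki.const_mul a).mul huji
  refine h.congr_deriv ?_
  obtain ⟨j', rfl⟩ : ∃ j', j = j' + 1 := ⟨j - 1, by omega⟩
  rcases Nat.eq_zero_or_pos k with rfl | hk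
  · push_cast
    simp only [Pi.inv_apply, Pi.pow_apply]
    field_simp
    ring
  · obtain ⟨k', rfl⟩ : ∃ k', k = k' + 1 := ⟨k - 1, by omega⟩
    push_cast
    simp only [Pi.inv_apply, Pi.pow_apply]
    field_simp
    ring

end Osc

namespace Osc2
open Osc

lemma p_repr (d : ℕ) : ∃ (ι : Type) (_ : Fintype ι) (a : ι → ℝ) (k j : ι → ℕ),
    (∀ i, 1 ≤ j i) ∧ ∀ r T : ℝ, 0 < r → 1 ≤ Real.log r → 1 ≤ T → ∀ ξ ∈ S,
      iteratedDerivWithin d (p r T) S ξ =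
        (Complex.I / T) * ((∑ i, a i * (ξ ^ k i)⁻¹ * ((u r ξ) ^ j i)⁻¹ : ℝ) : ℂ) := by
  induction d with
  | zero =>
    refine ⟨Unit, inferInstance, fun _ => 1, fun _ => 0, fun _ => 1, fun _ => le_refl 1,
      fun r T hr0 hr hT ξ hξ => ?_⟩
    rw [iteratedDerivWithin_zero]
    have hu1 : 1 ≤ u r ξ := u_pos hr0 hr hξ
    have hu0 : u r ξ ≠ 0 := by linarith
    have hT0 : (T:ℂ) ≠ 0 := by exact_mod_cast (by linarith : T ≠ 0)
    have hu0' : ((u r ξ : ℝ):ℂ) ≠ 0 := by exact_mod_cast hu0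
    simp only [p, Finset.sum_const, Finset.card_univ, Fintype.card_unit, one_smul,
      pow_zero, pow_one, one_mul, inv_one]
    push_cast
    field_simp
  | succ d ih =>
    obtain ⟨ι, inst, a, k, j, hj, hrep⟩ := ih
    refine ⟨ι ⊕ ι, inferInstance,
      Sum.elim (fun i => -(k i * a i)) (fun i => -(2 * j i * a i)),
      Sum.elim (fun i => k i + 1) (fun i => k i + 1),
      Sum.elim j (fun i => j i + 1), ?_, fun r T hr0 hr hT ξ hξ => ?_⟩
    · rintro (i | i) <;> simp [hj i] <;> omega
    · have hmem : S ∈ nhds ξ := isOpen_S.mem_nhds hξ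
      have hsum : HasDerivAt (fun x : ℝ => ∑ i, a i * (x ^ k i)⁻¹ * ((u r x) ^ j i)⁻¹)
          (∑ i, ((-(k i * a i)) * (ξ^(k i + 1))⁻¹ * ((u r ξ)^(j i))⁻¹
            + (-(2 * j i * a i)) * (ξ^(k i + 1))⁻¹ * ((u r ξ)^(j i + 1))⁻¹)) ξ :=
        HasDerivAt.fun_sum (fun i _ => term_hasDerivAt hr0 hr (a i) (k i) (j i) (hj i) hξ)
      have hF : HasDerivAt (fun x : ℝ => (Complex.I / T) *
          ((∑ i, a i * (x ^ k i)⁻¹ * ((u r x) ^ j i)⁻¹ : ℝ) : ℂ))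
          ((Complex.I / T) * ((∑ i, ((-(k i * a i)) * (ξ^(k i + 1))⁻¹ * ((u r ξ)^(j i))⁻¹
            + (-(2 * j i * a i)) * (ξ^(k i + 1))⁻¹ * ((u r ξ)^(j i + 1))⁻¹) : ℝ) : ℂ)) ξ :=
        (hsum.ofReal_comp).const_mul _
      rw [iteratedDerivWithin_succ, derivWithin_of_isOpen isOpen_S hξ]
      have heq : deriv (iteratedDerivWithin d (p r T) S) ξ
          = deriv (fun x : ℝ => (Complex.I / T) *
            ((∑ i, a i * (x ^ k i)⁻¹ * ((u r x) ^ j i)⁻¹ : ℝ) : ℂ)) ξ := by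
        apply Filter.EventuallyEq.deriv_eq
        filter_upwards [hmem] with x hx
        exact hrep r T hr0 hr hT x hx
      rw [heq, hF.deriv]
      congr 2
      rw [Fintype.sum_sum_type]
      simp only [Sum.elim_inl, Sum.elim_inr]
      rw [← Finset.sum_add_distrib]

lemma Icc_subset_S : Set.Icc (1:ℝ) 2 ⊆ S := fun x hx => by
  simp only [S, Set.mem_Ioi]; linarith [hx.1]

lemma p_bound (d : ℕ) : ∃ C : ℝ, 0 ≤ C ∧ ∀ r T : ℝ, 0 < r → 1 ≤ Real.log r → 1 ≤ T →
    ∀ ξ ∈ Set.Icc (1:ℝ) 2, ‖iteratedDerivWithin d (p r T) S ξ‖ ≤ C / (T * (Real.log r + 2)) := by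
  obtain ⟨ι, inst, a, k, j, hj, hrep⟩ := p_repr d
  refine ⟨∑ i, |a i|, Finset.sum_nonneg (fun i _ => abs_nonneg _), fun r T hr0 hr hT ξ hξ => ?_⟩
  have hξS : ξ ∈ S := Icc_subset_S hξ
  have hξ1 : (1:ℝ) ≤ ξ := hξ.1
  have hlam : (0:ℝ) < Real.log r + 2 := by linarith
  have hT0 : (0:ℝ) < T := by linarith
  have hu1 : 1 ≤ u r ξ := u_pos hr0 hr hξS
  have hulam : Real.log r + 2 ≤ u r ξ := u_ge hr0 hξ
  rw [hrep r T hr0 hr hT ξ hξS]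
  rw [norm_mul]
  have h1 : ‖Complex.I / (T:ℂ)‖ = 1 / T := by
    rw [norm_div, Complex.norm_I]
    simp [Complex.norm_real, abs_of_pos hT0]
  have h2 : ‖((∑ i, a i * (ξ ^ k i)⁻¹ * ((u r ξ) ^ j i)⁻¹ : ℝ) : ℂ)‖
      ≤ (∑ i, |a i|) * (Real.log r + 2)⁻¹ := by
    rw [Complex.norm_real]
    calc |∑ i, a i * (ξ ^ k i)⁻¹ * ((u r ξ) ^ j i)⁻¹|
        ≤ ∑ i, |a i * (ξ ^ k i)⁻¹ * ((u r ξ) ^ j i)⁻¹| := Finset.abs_sum_le_sum_abs _ _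
      _ ≤ ∑ i, |a i| * (Real.log r + 2)⁻¹ := by
          apply Finset.sum_le_sum
          intro i _
          rw [abs_mul, abs_mul]
          have hxk : (0:ℝ) < ξ ^ k i := by positivity
          have huj : (0:ℝ) < (u r ξ) ^ j i := by positivity
          rw [abs_inv, abs_inv, abs_of_pos hxk, abs_of_pos huj]
          have e1 : (ξ ^ k i)⁻¹ ≤ 1 := by
            rw [inv_le_one_iff₀]; right; exact one_le_pow₀ hξ1
          have e2 : ((u r ξ) ^ j i)⁻¹ ≤ (Real.log r + 2)⁻¹ := by
            apply inv_anti₀ hlam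
            calc Real.log r + 2 ≤ u r ξ := hulam
              _ = (u r ξ)^1 := (pow_one _).symm
              _ ≤ (u r ξ) ^ j i := pow_le_pow_right₀ hu1 (hj i)
          calc |a i| * (ξ ^ k i)⁻¹ * ((u r ξ) ^ j i)⁻¹
              ≤ |a i| * 1 * (Real.log r + 2)⁻¹ := by
                apply mul_le_mul
                · exact mul_le_mul_of_nonneg_left e1 (abs_nonneg _)
                · exact e2
                · positivity
                · positivity
              _ = |a i| * (Real.log r + 2)⁻¹ := by ring
      _ = (∑ i, |a i|) * (Real.log r + 2)⁻¹ := by rw [Finset.sum_mul]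
  calc ‖Complex.I / (T:ℂ)‖ * ‖((∑ i, a i * (ξ ^ k i)⁻¹ * ((u r ξ) ^ j i)⁻¹ : ℝ) : ℂ)‖
      ≤ (1/T) * ((∑ i, |a i|) * (Real.log r + 2)⁻¹) := by
        rw [h1]
        apply mul_le_mul_of_nonneg_left h2 (by positivity)
    _ = (∑ i, |a i|) / (T * (Real.log r + 2)) := by field_simp



lemma p_contDiffOn {r T : ℝ} (hr0 : 0 < r) (hr : 1 ≤ Real.log r) (hT : 1 ≤ T) :
    ContDiffOn ℝ (⊤ : ℕ∞) (p r T) S := by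
  have h1 : ContDiffOn ℝ (⊤ : ℕ∞) (fun ξ => ((u r ξ : ℝ) : ℂ)) S :=
    Complex.ofRealCLM.contDiff.comp_contDiffOn (u_contDiffOn hr0)
  have h0 : ∀ x ∈ S, (T:ℂ) * ((u r x : ℝ) : ℂ) ≠ 0 := by
    intro x hx
    have hu1 : 1 ≤ u r x := u_pos hr0 hr hx
    have h : (T : ℂ) * ((u r x : ℝ) : ℂ) = ((T * u r x : ℝ) : ℂ) := by push_cast; ring
    rw [h]
    have : T * u r x ≠ 0 := by nlinarith
    exact_mod_cast this
  have := contDiffOn_const (c := Complex.I) (s := S) (𝕜 := ℝ) (n := (⊤ : ℕ∞)) |>.mul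
    ((contDiffOn_const.mul h1).inv h0)
  refine this.congr ?_
  intro x hx
  simp [p, div_eq_mul_inv]

def W (r T : ℝ) (V : ℝ → ℂ) : ℕ → ℝ → ℂ
  | 0 => V
  | (s+1) => fun ξ => -deriv (fun x => W r T V s x * p r T x) ξ

lemma W_zero {r T : ℝ} {V : ℝ → ℂ} (hsupp : ∀ ξ ∉ Set.Icc (1:ℝ) 2, V ξ = 0) :
    ∀ s, ∀ ξ ∉ Set.Icc (1:ℝ) 2, W r T V s ξ = 0 := by
  intro s
  induction s with
  | zero => exact hsupp
  | succ s ih =>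
    intro ξ hξ
    have hopen : IsOpen (Set.Icc (1:ℝ) 2)ᶜ := isClosed_Icc.isOpen_compl
    have hev : (fun x => W r T V s x * p r T x) =ᶠ[nhds ξ] (fun _ => 0) := by
      filter_upwards [hopen.mem_nhds hξ] with x hx
      simp [ih x hx]
    show -deriv (fun x => W r T V s x * p r T x) ξ = 0
    rw [hev.deriv_eq, deriv_const]
    simp

lemma W_smooth {r T : ℝ} {V : ℝ → ℂ} (hr0 : 0 < r) (hr : 1 ≤ Real.log r) (hT : 1 ≤ T)
    (hV : ContDiff ℝ (⊤ : ℕ∞) V) : ∀ s, ContDiffOn ℝ (⊤ : ℕ∞) (W r T V s) S := by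
  intro s
  induction s with
  | zero => exact hV.contDiffOn
  | succ s ih =>
    have h1 : ContDiffOn ℝ (⊤ : ℕ∞) (fun x => W r T V s x * p r T x) S :=
      ih.mul (p_contDiffOn hr0 hr hT)
    have h2 : ContDiffOn ℝ (⊤ : ℕ∞) (deriv (fun x => W r T V s x * p r T x)) S :=
      h1.deriv_of_isOpen isOpen_S (by simp)
    exact h2.neg

def Cp (d : ℕ) : ℝ := (p_bound d).choose

lemma Cp_nonneg (d : ℕ) : 0 ≤ Cp d := (p_bound d).choose_spec.1

lemma Cp_spec (d : ℕ) {r T : ℝ} (hr0 : 0 < r) (hr : 1 ≤ Real.log r) (hT : 1 ≤ T)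
    {ξ : ℝ} (hξ : ξ ∈ Set.Icc (1:ℝ) 2) :
    ‖iteratedDerivWithin d (p r T) S ξ‖ ≤ Cp d / (T * (Real.log r + 2)) :=
  (p_bound d).choose_spec.2 r T hr0 hr hT ξ hξ

def K (Aco : ℕ → ℝ) : ℕ → ℕ → ℝ
  | 0, d => max (Aco d) 0
  | (s+1), d => ∑ i ∈ Finset.range (d+2), ((d+1).choose i : ℝ) * K Aco s i * Cp (d+1-i)

lemma K_nonneg (Aco : ℕ → ℝ) : ∀ s d, 0 ≤ K Aco s d := by
  intro s
  induction s with
  | zero => intro d; exact le_max_right _ _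
  | succ s ih =>
    intro d
    apply Finset.sum_nonneg
    intro i _
    have := ih i
    have := Cp_nonneg (d+1-i)
    positivity

lemma W_bound {r T Δ : ℝ} {V : ℝ → ℂ} {Aco : ℕ → ℝ}
    (hr0 : 0 < r) (hr : 1 ≤ Real.log r) (hT : 1 ≤ T) (hΔ : 1 ≤ Δ)
    (hV : ContDiff ℝ (⊤ : ℕ∞) V)
    (hder : ∀ (j : ℕ) (ξ : ℝ), ‖iteratedDeriv j V ξ‖ ≤ Aco j * Δ ^ j) :
    ∀ s d, ∀ ξ ∈ Set.Icc (1:ℝ) 2,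
      ‖iteratedDerivWithin d (W r T V s) S ξ‖
        ≤ K Aco s d * Δ ^ d * (Δ / (T * (Real.log r + 2))) ^ s := by
  have hlam : (0:ℝ) < T * (Real.log r + 2) := by nlinarith
  intro s
  induction s with
  | zero =>
    intro d ξ hξ
    have hξS : ξ ∈ S := Icc_subset_S hξ
    have heq : iteratedDerivWithin d (W r T V 0) S ξ = iteratedDeriv d V ξ := by
      rw [show W r T V 0 = V from rfl, iteratedDerivWithin_eq_iteratedFDerivWithin,
        iteratedFDerivWithin_of_isOpen d isOpen_S hξS, ← iteratedDeriv_eq_iteratedFDeriv]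
    rw [heq]
    calc ‖iteratedDeriv d V ξ‖ ≤ Aco d * Δ ^ d := hder d ξ
      _ ≤ max (Aco d) 0 * Δ ^ d := by
          apply mul_le_mul_of_nonneg_right (le_max_left _ _) (by positivity)
      _ = K Aco 0 d * Δ ^ d * (Δ / (T * (Real.log r + 2))) ^ 0 := by
          rw [pow_zero, mul_one]; rfl
  | succ s ih =>
    intro d ξ hξ
    have hξS : ξ ∈ S := Icc_subset_S hξ
    -- rewrite as (d+1)-st derivative of the product
    have hEq : Set.EqOn (W r T V (s+1))
        (fun x => -derivWithin (fun y => W r T V s y * p r T y) S x) S := by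
      intro x hx
      show -deriv (fun y => W r T V s y * p r T y) x = _
      rw [← derivWithin_of_isOpen isOpen_S hx]
    have step1 : iteratedDerivWithin d (W r T V (s+1)) S ξ
        = -iteratedDerivWithin (d+1) (fun y => W r T V s y * p r T y) S ξ := by
      rw [iteratedDerivWithin_congr hEq hξS]
      show iteratedDerivWithin d (-derivWithin (fun y => W r T V s y * p r T y) S) S ξ = _
      rw [iteratedDerivWithin_neg, ← iteratedDerivWithin_succ']
    rw [step1, norm_neg]
    -- Leibniz
    have hmul := norm_iteratedFDerivWithin_mul_le (𝕜 := ℝ)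
      (W_smooth hr0 hr hT hV s) (p_contDiffOn hr0 hr hT) uniqueDiffOn_S hξS
      (show ((d+1 : ℕ) : WithTop ℕ∞) ≤ ((⊤ : ℕ∞) : WithTop ℕ∞) from WithTop.coe_le_coe.mpr le_top)
    rw [← norm_iteratedFDerivWithin_eq_norm_iteratedDerivWithin]
    refine le_trans hmul ?_
    have key : ∀ i ∈ Finset.range (d+2),
        ((d+1).choose i : ℝ) * ‖iteratedFDerivWithin ℝ i (W r T V s) S ξ‖ *
          ‖iteratedFDerivWithin ℝ (d+1-i) (p r T) S ξ‖
        ≤ (((d+1).choose i : ℝ) * K Aco s i * Cp (d+1-i)) * Δ ^ d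
            * (Δ / (T * (Real.log r + 2))) ^ (s+1) := by
      intro i hi
      have hi' : i ≤ d + 1 := by
        simp only [Finset.mem_range] at hi; omega
      have h1 : ‖iteratedFDerivWithin ℝ i (W r T V s) S ξ‖
          ≤ K Aco s i * Δ ^ i * (Δ / (T * (Real.log r + 2))) ^ s := by
        rw [norm_iteratedFDerivWithin_eq_norm_iteratedDerivWithin]
        exact ih i ξ hξ
      have h2 : ‖iteratedFDerivWithin ℝ (d+1-i) (p r T) S ξ‖
          ≤ Cp (d+1-i) / (T * (Real.log r + 2)) := by
        rw [norm_iteratedFDerivWithin_eq_norm_iteratedDerivWithin]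
        exact Cp_spec (d+1-i) hr0 hr hT hξ
      have hXpos : (0:ℝ) < Δ / (T * (Real.log r + 2)) := by positivity
      calc ((d+1).choose i : ℝ) * ‖iteratedFDerivWithin ℝ i (W r T V s) S ξ‖ *
            ‖iteratedFDerivWithin ℝ (d+1-i) (p r T) S ξ‖
          ≤ ((d+1).choose i : ℝ) * (K Aco s i * Δ ^ i * (Δ / (T * (Real.log r + 2))) ^ s) *
            (Cp (d+1-i) / (T * (Real.log r + 2))) := by
            apply mul_le_mul
            · exact mul_le_mul_of_nonneg_left h1 (by positivity)
            · exact h2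
            · exact norm_nonneg _
            · have := K_nonneg Aco s i
              positivity
        _ = (((d+1).choose i : ℝ) * K Aco s i * Cp (d+1-i)) *
              (Δ ^ i * ((Δ / (T * (Real.log r + 2))) ^ s / (T * (Real.log r + 2)))) := by
            ring
        _ ≤ (((d+1).choose i : ℝ) * K Aco s i * Cp (d+1-i)) *
              (Δ ^ (d+1) * ((Δ / (T * (Real.log r + 2))) ^ s / (T * (Real.log r + 2)))) := by
            apply mul_le_mul_of_nonneg_left
            · apply mul_le_mul_of_nonneg_right (pow_le_pow_right₀ hΔ hi')
              positivity
            · have := K_nonneg Aco s i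
              have := Cp_nonneg (d+1-i)
              positivity
        _ = (((d+1).choose i : ℝ) * K Aco s i * Cp (d+1-i)) * Δ ^ d
              * (Δ / (T * (Real.log r + 2))) ^ (s+1) := by
            rw [pow_succ]
            ring
    calc ∑ i ∈ Finset.range (d+1+1), ((d+1).choose i : ℝ) *
          ‖iteratedFDerivWithin ℝ i (W r T V s) S ξ‖ *
          ‖iteratedFDerivWithin ℝ (d+1-i) (p r T) S ξ‖
        ≤ ∑ i ∈ Finset.range (d+2), (((d+1).choose i : ℝ) * K Aco s i * Cp (d+1-i)) * Δ ^ d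
            * (Δ / (T * (Real.log r + 2))) ^ (s+1) := Finset.sum_le_sum key
      _ = K Aco (s+1) d * Δ ^ d * (Δ / (T * (Real.log r + 2))) ^ (s+1) := by
          rw [show K Aco (s+1) d = ∑ i ∈ Finset.range (d+2),
            ((d+1).choose i : ℝ) * K Aco s i * Cp (d+1-i) from rfl,
            Finset.sum_mul, Finset.sum_mul]

def E (r T ξ : ℝ) : ℂ := Complex.exp (Complex.I * ((-(T * ξ * Real.log (r * ξ^2)) : ℝ) : ℂ))

lemma E_norm (r T ξ : ℝ) : ‖E r T ξ‖ = 1 := by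
  rw [E, Complex.norm_exp]
  simp

lemma E_hasDerivAt {r T : ℝ} (hr0 : 0 < r) {ξ : ℝ} (hξ : ξ ∈ S) :
    HasDerivAt (E r T) (Complex.I * ((-(T * u r ξ) : ℝ) : ℂ) * E r T ξ) ξ := by
  have hξ' : (1/2:ℝ) < ξ := hξ
  have hξ0 : ξ ≠ 0 := by positivity
  have hlog : HasDerivAt (fun x : ℝ => Real.log (r * x^2)) (2/ξ) ξ := by
    have := u_hasDerivAt hr0 hξ
    have h2 : (fun x : ℝ => Real.log (r * x^2)) = fun x => u r x - 2 := by
      funext x; simp [u]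
    rw [h2]
    simpa using this.sub_const 2
  have h1 : HasDerivAt (fun x : ℝ => T * x) T ξ := by
    simpa using (hasDerivAt_id ξ).const_mul T
  have hG : HasDerivAt (fun x : ℝ => -(T * x * Real.log (r * x^2))) (-(T * u r ξ)) ξ := by
    have hmul := h1.mul hlog
    have := hmul.neg
    refine this.congr_deriv ?_
    simp only [u]
    field_simp
  have hinner : HasDerivAt (fun x : ℝ => Complex.I * ((-(T * x * Real.log (r * x^2)) : ℝ) : ℂ))
      (Complex.I * ((-(T * u r ξ) : ℝ) : ℂ)) ξ := (hG.ofReal_comp).const_mul Complex.I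
  have := hinner.cexp
  refine this.congr_deriv ?_
  rw [E]
  ring

lemma cont_glue {F : ℝ → ℂ} (h1 : ContinuousOn F S) (h2 : ∀ ξ ∉ Set.Icc (1:ℝ) 2, F ξ = 0) :
    Continuous F := by
  rw [continuous_iff_continuousAt]
  intro x
  by_cases hx : x ∈ S
  · exact h1.continuousAt (isOpen_S.mem_nhds hx)
  · have hx' : x ∈ (Set.Icc (1:ℝ) 2)ᶜ := fun hmem => hx (Icc_subset_S hmem)
    have hev : F =ᶠ[nhds x] (fun _ => 0) := by
      filter_upwards [isClosed_Icc.isOpen_compl.mem_nhds hx'] with y hy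
      exact h2 y hy
    exact ContinuousAt.congr continuousAt_const hev.symm

lemma WE_integrable {r T : ℝ} {V : ℝ → ℂ} (hr0 : 0 < r) (hr : 1 ≤ Real.log r) (hT : 1 ≤ T)
    (hV : ContDiff ℝ (⊤ : ℕ∞) V) (hsupp : ∀ ξ ∉ Set.Icc (1:ℝ) 2, V ξ = 0) (s : ℕ) :
    Integrable (fun ξ => W r T V s ξ * E r T ξ) := by
  have hcont : Continuous (fun ξ => W r T V s ξ * E r T ξ) := by
    apply cont_glue
    · apply ContinuousOn.mul ((W_smooth hr0 hr hT hV s).continuousOn)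
      intro x hx
      exact (E_hasDerivAt hr0 hx).continuousAt.continuousWithinAt
    · intro ξ hξ
      rw [W_zero hsupp s ξ hξ, zero_mul]
  apply hcont.integrable_of_hasCompactSupport
  apply HasCompactSupport.intro isCompact_Icc
  intro ξ hξ
  rw [W_zero hsupp s ξ hξ, zero_mul]

lemma step_integral {r T : ℝ} {V : ℝ → ℂ} (hr0 : 0 < r) (hr : 1 ≤ Real.log r) (hT : 1 ≤ T)
    (hV : ContDiff ℝ (⊤ : ℕ∞) V) (hsupp : ∀ ξ ∉ Set.Icc (1:ℝ) 2, V ξ = 0) (s : ℕ) :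
    ∫ ξ, W r T V s ξ * E r T ξ = ∫ ξ, W r T V (s+1) ξ * E r T ξ := by
  set f := fun ξ => W r T V s ξ * p r T ξ * E r T ξ with hf_def
  set f' := fun ξ => W r T V s ξ * E r T ξ - W r T V (s+1) ξ * E r T ξ with hf'_def
  have hd : ∀ ξ, HasDerivAt f (f' ξ) ξ := by
    intro ξ
    by_cases hξ : ξ ∈ Set.Icc (1:ℝ) 2
    · have hξS : ξ ∈ S := Icc_subset_S hξ
      have hmem : S ∈ nhds ξ := isOpen_S.mem_nhds hξS
      have hW : DifferentiableAt ℝ (W r T V s) ξ :=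
        ((W_smooth hr0 hr hT hV s).differentiableOn (by simp)).differentiableAt hmem
      have hp : DifferentiableAt ℝ (p r T) ξ :=
        ((p_contDiffOn hr0 hr hT).differentiableOn (by simp)).differentiableAt hmem
      have hWp : HasDerivAt (fun x => W r T V s x * p r T x)
          (deriv (fun x => W r T V s x * p r T x) ξ) ξ :=
        (hW.mul hp).hasDerivAt
      have hE := E_hasDerivAt (T := T) hr0 hξS
      have h := hWp.mul hE
      have hu1 : 1 ≤ u r ξ := u_pos hr0 hr hξS
      have hTu : ((T:ℂ) * ((u r ξ : ℝ):ℂ)) ≠ 0 := by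
        have h2 : T * u r ξ ≠ 0 := by nlinarith
        have h3 : ((T * u r ξ : ℝ) : ℂ) ≠ 0 := by exact_mod_cast h2
        push_cast at h3
        exact h3
      have hps : p r T ξ * (Complex.I * ((-(T * u r ξ) : ℝ) : ℂ)) = 1 := by
        rw [p]
        have hc : ((-(T * u r ξ) : ℝ) : ℂ) = -((T:ℂ) * ((u r ξ : ℝ):ℂ)) := by push_cast; ring
        rw [hc]
        rw [div_mul_eq_mul_div, div_eq_one_iff_eq hTu]
        linear_combination (-(↑T * ((u r ξ : ℝ):ℂ))) * Complex.I_mul_I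
      have hW1 : W r T V (s+1) ξ = -deriv (fun x => W r T V s x * p r T x) ξ := rfl
      have hval : deriv (fun x => W r T V s x * p r T x) ξ * E r T ξ
          + W r T V s ξ * p r T ξ * (Complex.I * ((-(T * u r ξ) : ℝ) : ℂ) * E r T ξ) = f' ξ := by
        show _ = W r T V s ξ * E r T ξ - W r T V (s+1) ξ * E r T ξ
        rw [hW1]
        linear_combination (W r T V s ξ * E r T ξ) * hps
      exact hval ▸ h
    · have hξc : ξ ∈ (Set.Icc (1:ℝ) 2)ᶜ := hξ
      have hev : f =ᶠ[nhds ξ] (fun _ => (0:ℂ)) := by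
        filter_upwards [isClosed_Icc.isOpen_compl.mem_nhds hξc] with y hy
        simp [hf_def, W_zero hsupp s y hy]
      have h0 : HasDerivAt f 0 ξ :=
        (hasDerivAt_const ξ (0:ℂ)).congr_of_eventuallyEq hev
      have : f' ξ = 0 := by
        simp [hf'_def, W_zero hsupp s ξ hξ, W_zero hsupp (s+1) ξ hξ]
      rw [this]
      exact h0
  have hint1 := WE_integrable hr0 hr hT hV hsupp s
  have hint2 := WE_integrable hr0 hr hT hV hsupp (s+1)
  have hf'int : Integrable f' := hint1.sub hint2
  have hfint : Integrable f := by
    have hcont : Continuous f := by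
      apply cont_glue
      · apply ContinuousOn.mul
        · exact ((W_smooth hr0 hr hT hV s).continuousOn).mul
            ((p_contDiffOn hr0 hr hT).continuousOn)
        · intro x hx
          exact (E_hasDerivAt hr0 hx).continuousAt.continuousWithinAt
      · intro ξ hξ
        simp [hf_def, W_zero hsupp s ξ hξ]
    apply hcont.integrable_of_hasCompactSupport
    apply HasCompactSupport.intro (isCompact_Icc (a := (1:ℝ)) (b := 2))
    intro ξ hξ
    simp [hf_def, W_zero hsupp s ξ hξ]
  have hzero : ∫ ξ, f' ξ = 0 :=
    integral_eq_zero_of_hasDerivAt_of_integrable hd hf'int hfint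
  have := integral_sub hint1 hint2
  rw [hf'_def] at hzero
  rw [this] at hzero
  exact sub_eq_zero.mp hzero

lemma integral_bound {r T Δ : ℝ} {V : ℝ → ℂ} {Aco : ℕ → ℝ}
    (hr0 : 0 < r) (hr : 1 ≤ Real.log r) (hT : 1 ≤ T) (hΔ : 1 ≤ Δ)
    (hV : ContDiff ℝ (⊤ : ℕ∞) V) (hsupp : ∀ ξ ∉ Set.Icc (1:ℝ) 2, V ξ = 0)
    (hder : ∀ (j : ℕ) (ξ : ℝ), ‖iteratedDeriv j V ξ‖ ≤ Aco j * Δ ^ j) (N : ℕ) :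
    ‖∫ ξ, V ξ * E r T ξ‖ ≤ K Aco N 0 * (Δ / (T * (Real.log r + 2))) ^ N := by
  have h1 : ∫ ξ, V ξ * E r T ξ = ∫ ξ, W r T V N ξ * E r T ξ := by
    induction N with
    | zero => rfl
    | succ N ih => rw [ih, step_integral hr0 hr hT hV hsupp N]
  rw [h1]
  have h2 : ∫ ξ, W r T V N ξ * E r T ξ
      = ∫ ξ in Set.Icc (1:ℝ) 2, W r T V N ξ * E r T ξ := by
    symm
    apply setIntegral_eq_integral_of_forall_compl_eq_zero
    intro x hx
    rw [W_zero hsupp N x hx, zero_mul]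
  rw [h2]
  have h3 : ‖∫ ξ in Set.Icc (1:ℝ) 2, W r T V N ξ * E r T ξ‖
      ≤ (K Aco N 0 * (Δ / (T * (Real.log r + 2))) ^ N) * (volume (Set.Icc (1:ℝ) 2)).toReal := by
    apply norm_setIntegral_le_of_norm_le_const
    · rw [Real.volume_Icc]; exact ENNReal.ofReal_lt_top
    · intro x hx
      rw [norm_mul, E_norm, mul_one]
      have := W_bound hr0 hr hT hΔ hV hder N 0 x hx
      rw [iteratedDerivWithin_zero] at this
      simpa using this
  have h4 : (volume (Set.Icc (1:ℝ) 2)).toReal = 1 := by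
    rw [Real.volume_Icc]
    norm_num
  rw [h4, mul_one] at h3
  exact h3

end Osc2

set_option maxHeartbeats 1000000 in
open Osc Osc2 in
theorem stmt_17' (ε : ℝ) (hε : 0 < ε) (hε' : ε < 1/8) (Aco : ℕ → ℝ) :
    ∃ T₀ : ℝ, ∀ A : ℝ, 0 < A → ∃ cA : ℝ,
      ∀ T : ℝ, T₀ ≤ T → ∀ Δ : ℝ, 1 ≤ Δ → Δ ≤ T ^ (1/2 - ε) →
      ∀ V₂ : ℝ → ℂ, ContDiff ℝ (⊤ : ℕ∞) V₂ →
        (∀ ξ : ℝ, ξ ∉ Set.Icc (1:ℝ) 2 → V₂ ξ = 0) →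
        (∀ (j : ℕ) (ξ : ℝ), ‖iteratedDeriv j V₂ ξ‖ ≤ Aco j * Δ ^ j) →
      ∀ m n k : ℕ, 0 < m → 0 < n → 0 < k →
        (n : ℝ) ≤ T ^ (1 + ε) → (m : ℝ) ≤ T ^ (1/2 + ε) →
      ‖(∫ ξ : ℝ, V₂ ξ *
          Complex.exp (-(I * T * ξ) * Real.log
            (T^2 * ξ^2 * k / (4 * π^2 * Real.exp 1 ^ 2 * m * n))))‖
        ≤ cA * T ^ (-A) := by
  refine ⟨max 4 ((4 * π^2 * Real.exp 1 ^ 3) ^ (4:ℕ)), fun A hA => ?_⟩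
  set N := ⌈2*A⌉₊ with hN
  refine ⟨K Aco N 0, ?_⟩
  intro T hT Δ hΔ1 hΔ2 V hV hsupp hder m n k hm hn hk hnT hmT
  have hT4 : (4:ℝ) ≤ T := le_trans (le_max_left _ _) hT
  have hT1 : (1:ℝ) ≤ T := by linarith
  have hT0 : (0:ℝ) < T := by linarith
  have hm1 : (1:ℝ) ≤ (m:ℝ) := by exact_mod_cast hm
  have hn1 : (1:ℝ) ≤ (n:ℝ) := by exact_mod_cast hn
  have hk1 : (1:ℝ) ≤ (k:ℝ) := by exact_mod_cast hk
  have hπ : (0:ℝ) < π := Real.pi_pos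
  have hex : (0:ℝ) < Real.exp 1 := Real.exp_pos 1
  set C4 : ℝ := 4 * π^2 * Real.exp 1 ^ 2 with hC4
  have hC40 : 0 < C4 := by positivity
  set r : ℝ := T^2 * k / (C4 * m * n) with hr_def
  have hr0 : 0 < r := by positivity
  -- lower bound on r
  have hmn : (m:ℝ) * n ≤ T ^ ((1:ℝ)/2 + ε) * T ^ (1 + ε) :=
    mul_le_mul hmT hnT (by positivity) (by positivity)
  have hmn2 : (m:ℝ) * n ≤ T ^ ((3:ℝ)/2 + 2*ε) := by
    calc (m:ℝ) * n ≤ T ^ ((1:ℝ)/2 + ε) * T ^ (1 + ε) := hmn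
      _ = T ^ ((1:ℝ)/2 + ε + (1 + ε)) := (Real.rpow_add hT0 _ _).symm
      _ = T ^ ((3:ℝ)/2 + 2*ε) := by ring_nf
  have hrlow : T ^ ((1:ℝ)/2 - 2*ε) / C4 ≤ r := by
    have e1 : T^2 * (k:ℝ) ≥ T^2 * 1 := by nlinarith
    have e2 : C4 * m * n ≤ C4 * T ^ ((3:ℝ)/2 + 2*ε) := by
      calc C4 * m * n = C4 * ((m:ℝ)*n) := by ring
        _ ≤ C4 * T ^ ((3:ℝ)/2 + 2*ε) := by
            apply mul_le_mul_of_nonneg_left hmn2 (le_of_lt hC40)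
    have e3 : (0:ℝ) < C4 * m * n := by positivity
    have e4 : T^2 / (C4 * T ^ ((3:ℝ)/2 + 2*ε)) ≤ T^2 * k / (C4 * m * n) := by
      apply div_le_div₀ (by positivity) (by nlinarith) e3 e2
    have hkey : T ^ ((1:ℝ)/2 - 2*ε) * T ^ ((3:ℝ)/2 + 2*ε) = T^2 := by
      rw [← Real.rpow_add hT0]
      rw [show (T:ℝ)^2 = T ^ (2:ℝ) by norm_num [Real.rpow_natCast]]
      norm_num
    calc T ^ ((1:ℝ)/2 - 2*ε) / C4
        = T^2 / (C4 * T ^ ((3:ℝ)/2 + 2*ε)) := by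
          rw [div_eq_div_iff (by positivity) (by positivity)]
          linear_combination C4 * hkey
      _ ≤ r := e4
  have hre : Real.exp 1 ≤ r := by
    have e5 : T ^ ((1:ℝ)/4) ≤ T ^ ((1:ℝ)/2 - 2*ε) :=
      Real.rpow_le_rpow_of_exponent_le hT1 (by linarith)
    have e6 : 4 * π^2 * Real.exp 1 ^ 3 ≤ T ^ ((1:ℝ)/4) := by
      have h7 : ((4 * π^2 * Real.exp 1 ^ 3) ^ (4:ℕ) : ℝ) ≤ T := le_trans (le_max_right _ _) hT
      have h8 : (0:ℝ) ≤ 4 * π^2 * Real.exp 1 ^ 3 := by positivity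
      calc 4 * π^2 * Real.exp 1 ^ 3
          = (((4 * π^2 * Real.exp 1 ^ 3) ^ (4:ℕ) : ℝ)) ^ ((1:ℝ)/4) := by
            rw [← Real.rpow_natCast _ 4, ← Real.rpow_mul h8]
            norm_num
        _ ≤ T ^ ((1:ℝ)/4) := Real.rpow_le_rpow (by positivity) h7 (by norm_num)
    calc Real.exp 1 = (4 * π^2 * Real.exp 1 ^ 3) / C4 := by
          rw [hC4, eq_div_iff (ne_of_gt (by positivity : (0:ℝ) < 4 * π^2 * Real.exp 1 ^ 2))]
          ring
      _ ≤ T ^ ((1:ℝ)/4) / C4 := by exact div_le_div_of_nonneg_right e6 hC40.le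
      _ ≤ T ^ ((1:ℝ)/2 - 2*ε) / C4 := by exact div_le_div_of_nonneg_right e5 hC40.le
      _ ≤ r := hrlow
  have hlogr : 1 ≤ Real.log r := by
    rw [← Real.log_exp 1]
    exact Real.log_le_log (Real.exp_pos 1) hre
  -- rewrite the integrand
  have hinteq : (fun ξ : ℝ => V ξ * Complex.exp (-(I * T * ξ) * Real.log
      (T^2 * ξ^2 * k / (4 * π^2 * Real.exp 1 ^ 2 * m * n)))) = fun ξ => V ξ * E r T ξ := by
    funext ξ
    have hL : T^2 * ξ^2 * k / (4 * π^2 * Real.exp 1 ^ 2 * m * n) = r * ξ^2 := by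
      rw [hr_def, hC4]; ring
    rw [E, hL]
    congr 1
    push_cast
    ring
  rw [hinteq]
  have hbound := integral_bound hr0 hlogr hT1 hΔ1 hV hsupp hder N
  refine le_trans hbound ?_
  -- final arithmetic
  have hlam3 : (3:ℝ) ≤ Real.log r + 2 := by linarith
  have hΔT : Δ ≤ T ^ ((1:ℝ)/2) := by
    calc Δ ≤ T ^ (1/2 - ε) := hΔ2
      _ ≤ T ^ ((1:ℝ)/2) := Real.rpow_le_rpow_of_exponent_le hT1 (by linarith)
  have hX : Δ / (T * (Real.log r + 2)) ≤ T ^ (-(1:ℝ)/2) := by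
    have h9 : T * 1 ≤ T * (Real.log r + 2) :=
      mul_le_mul_of_nonneg_left (by linarith) (le_of_lt hT0)
    calc Δ / (T * (Real.log r + 2)) ≤ T ^ ((1:ℝ)/2) / (T * 1) := by
          apply div_le_div₀ (by positivity) hΔT (by linarith) h9
      _ = T ^ ((1:ℝ)/2) / T ^ (1:ℝ) := by rw [Real.rpow_one, mul_one]
      _ = T ^ ((1:ℝ)/2 - 1) := (Real.rpow_sub hT0 _ _).symm
      _ = T ^ (-(1:ℝ)/2) := by norm_num
  have hX0 : 0 ≤ Δ / (T * (Real.log r + 2)) := by positivity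
  have hXN : (Δ / (T * (Real.log r + 2))) ^ N ≤ T ^ (-A) := by
    calc (Δ / (T * (Real.log r + 2))) ^ N ≤ (T ^ (-(1:ℝ)/2)) ^ N :=
          pow_le_pow_left₀ hX0 hX N
      _ = T ^ ((-(1:ℝ)/2) * N) := by
          rw [← Real.rpow_natCast (T ^ (-(1:ℝ)/2)) N, ← Real.rpow_mul (le_of_lt hT0)]
      _ ≤ T ^ (-A) := by
          apply Real.rpow_le_rpow_of_exponent_le hT1
          have := Nat.le_ceil (2*A)
          rw [hN]
          push_cast at this ⊢
          linarith
  calc K Aco N 0 * (Δ / (T * (Real.log r + 2))) ^ N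
      ≤ K Aco N 0 * T ^ (-A) :=
        mul_le_mul_of_nonneg_left hXN (K_nonneg Aco N 0)

end

/-- Key oscillatory integral bound for Lemma 4.3. -/
theorem stmt_17 (ε : ℝ) (hε : 0 < ε) (hε' : ε < 1/8) (Aco : ℕ → ℝ) :
    ∃ T₀ : ℝ, ∀ A : ℝ, 0 < A → ∃ cA : ℝ,
      ∀ T : ℝ, T₀ ≤ T → ∀ Δ : ℝ, 1 ≤ Δ → Δ ≤ T ^ (1/2 - ε) →
      ∀ V₂ : ℝ → ℂ, ContDiff ℝ (⊤ : ℕ∞) V₂ →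
        (∀ ξ : ℝ, ξ ∉ Set.Icc (1:ℝ) 2 → V₂ ξ = 0) →
        (∀ (j : ℕ) (ξ : ℝ), ‖iteratedDeriv j V₂ ξ‖ ≤ Aco j * Δ ^ j) →
      ∀ m n k : ℕ, 0 < m → 0 < n → 0 < k →
        (n : ℝ) ≤ T ^ (1 + ε) → (m : ℝ) ≤ T ^ (1/2 + ε) →
      ‖(∫ ξ : ℝ, V₂ ξ *
          Complex.exp (-(I * T * ξ) * Real.log
            (T^2 * ξ^2 * k / (4 * π^2 * Real.exp 1 ^ 2 * m * n))))‖
        ≤ cA * T ^ (-A) :=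
  stmt_17' ε hε hε' Aco
end

section
/- (Bound on R₁ from the proof of Lemma 4.5) For every δ > 0 there exist ε₀ > 0 and C (depending only on δ, C₀, the A_i, and V₁) such that for all ε ∈ (0, ε₀], all T ≥ 2, all Δ ∈ [1, T^{1/2−ε}], all real N ∈ [1, T^{1+ε}], M ∈ [1, T^{1/2+ε}], and all u ∈ ℂ with Re(u) = ε and |Im(u)| ≤ T^ε: |T^{−3/4}·∫_ℝ V(t/T)·(∑_{n≥1} λ(n)·n^{−1/2−it−u}·V₁(n/N))·(∑_{m≥1} m^{−1/2+it−u}·V₁(m/M))·t^{3u/2} dt| ≤ C·T^{1/4+δ}. -/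
open Complex Real MeasureTheory Finset

lemma harm_bound (K : ℕ) : ∑ k ∈ Finset.range K, (1:ℝ)/((k:ℝ)+1) ≤ 1 + Real.log K := by
  have h1 := harmonic_le_one_add_log K
  have h : ((harmonic K : ℚ) : ℝ) = ∑ k ∈ Finset.range K, (1:ℝ)/((k:ℝ)+1) := by
    simp [harmonic, one_div]
  rw [← h]
  exact_mod_cast h1

lemma inv_dist_sum (K n : ℕ) (hn : n < K) :
    ∑ m ∈ Finset.range K, (if n = m then 0 else 1/|(n:ℝ)-(m:ℝ)|)
      ≤ 2*(1 + Real.log K) := by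
  set f : ℕ → ℝ := fun m => if n = m then 0 else 1/|(n:ℝ)-(m:ℝ)| with hf
  have hg0 : ∀ k : ℕ, (0:ℝ) ≤ 1/((k:ℝ)+1) := fun k => by positivity
  have hsplit : ∑ m ∈ Finset.range K, f m
      = ∑ m ∈ Finset.range n, f m + ∑ m ∈ Finset.Ico n K, f m := by
    rw [Finset.range_eq_Ico, ← Finset.sum_Ico_consecutive _ (Nat.zero_le n) hn.le,
      ← Finset.range_eq_Ico]
  have h2 : ∑ m ∈ Finset.Ico n K, f m = f n + ∑ m ∈ Finset.Ico (n+1) K, f m :=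
    Finset.sum_eq_sum_Ico_succ_bot hn f
  have hfn : f n = 0 := by simp [hf]
  have hpart1 : ∑ m ∈ Finset.range n, f m ≤ ∑ k ∈ Finset.range K, (1:ℝ)/((k:ℝ)+1) := by
    have hrefl := Finset.sum_range_reflect f n
    have : ∑ j ∈ Finset.range n, f (n - 1 - j) = ∑ j ∈ Finset.range n, (1:ℝ)/((j:ℝ)+1) := by
      apply Finset.sum_congr rfl
      intro j hj
      rw [Finset.mem_range] at hj
      have h1 : n - 1 - j < n := by omega
      have h2 : ((n - 1 - j : ℕ) : ℝ) = (n:ℝ) - 1 - j := by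
        have h3 : n - 1 - j + (1 + j) = n := by omega
        have := congrArg (Nat.cast : ℕ → ℝ) h3
        push_cast at this
        linarith
      rw [hf]
      simp only
      rw [if_neg (by omega), h2]
      rw [show (n:ℝ) - ((n:ℝ) - 1 - j) = (j:ℝ)+1 by ring, abs_of_pos (by positivity)]
    rw [← hrefl, this]
    exact Finset.sum_le_sum_of_subset_of_nonneg
      (Finset.range_subset_range.2 hn.le) (fun k _ _ => hg0 k)
  have hpart2 : ∑ m ∈ Finset.Ico (n+1) K, f m ≤ ∑ k ∈ Finset.range K, (1:ℝ)/((k:ℝ)+1) := by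
    rw [Finset.sum_Ico_eq_sum_range]
    have : ∑ i ∈ Finset.range (K - (n+1)), f (n+1+i)
        = ∑ i ∈ Finset.range (K - (n+1)), (1:ℝ)/((i:ℝ)+1) := by
      apply Finset.sum_congr rfl
      intro i _
      rw [hf]
      simp only
      rw [if_neg (by omega)]
      push_cast
      rw [show (n:ℝ) - ((n:ℝ)+1+(i:ℝ)) = -((i:ℝ)+1) by ring, abs_neg,
        abs_of_pos (by positivity)]
    rw [this]
    exact Finset.sum_le_sum_of_subset_of_nonneg
      (Finset.range_subset_range.2 (by omega)) (fun k _ _ => hg0 k)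
  calc ∑ m ∈ Finset.range K, f m
      = ∑ m ∈ Finset.range n, f m + (f n + ∑ m ∈ Finset.Ico (n+1) K, f m) := by
        rw [hsplit, h2]
    _ ≤ ∑ k ∈ Finset.range K, (1:ℝ)/((k:ℝ)+1) + (0 + ∑ k ∈ Finset.range K, (1:ℝ)/((k:ℝ)+1)) := by
        rw [hfn]; exact add_le_add hpart1 (add_le_add le_rfl hpart2)
    _ = 2 * ∑ k ∈ Finset.range K, (1:ℝ)/((k:ℝ)+1) := by ring
    _ ≤ 2*(1 + Real.log K) := by
        have := harm_bound K
        linarith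

set_option maxHeartbeats 1000000 in
lemma mvt_bound (K : ℕ) (a : ℕ → ℂ) (θ : ℕ → ℝ) (T : ℝ) (hT : 0 ≤ T) :
    ∫ t in T..(2*T), ‖∑ n ∈ Finset.range K, a n * Complex.exp ((θ n : ℂ) * I * t)‖^2
      ≤ ∑ n ∈ Finset.range K, ∑ m ∈ Finset.range K,
          ‖a n‖ * ‖a m‖ *
            (if θ n = θ m then T else 2/|θ n - θ m|) := by
  obtain ⟨G, hG⟩ : ∃ G : ℕ → ℕ → ℝ → ℂ, G = fun n m (t : ℝ) =>
      (a n * (starRingEnd ℂ) (a m)) * Complex.exp ((((θ n - θ m : ℝ)):ℂ) * I * (t:ℂ)) := ⟨_, rfl⟩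
  have hGcont : ∀ n m, Continuous (G n m) := by
    intro n m
    rw [hG]
    exact continuous_const.mul (Complex.continuous_exp.comp
      ((continuous_const.mul continuous_const).mul Complex.continuous_ofReal))
  have hSG : ∀ t : ℝ, ‖∑ n ∈ Finset.range K, a n * Complex.exp ((θ n : ℂ) * I * t)‖^2
      = ∑ p ∈ Finset.range K ×ˢ Finset.range K, (G p.1 p.2 t).re := by
    intro t
    set S := ∑ n ∈ Finset.range K, a n * Complex.exp ((θ n : ℂ) * I * t) with hS
    have h1 : (‖S‖:ℝ)^2 = (S * (starRingEnd ℂ) S).re := by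
      rw [Complex.mul_conj]
      simp [Complex.normSq_eq_norm_sq, ← Complex.ofReal_pow]
    have h2 : S * (starRingEnd ℂ) S
        = ∑ n ∈ Finset.range K, ∑ m ∈ Finset.range K, G n m t := by
      rw [hS, map_sum, Finset.sum_mul_sum]
      apply Finset.sum_congr rfl
      intro n _
      apply Finset.sum_congr rfl
      intro m _
      have hconj : (starRingEnd ℂ) (Complex.exp ((θ m : ℂ) * I * ↑t))
          = Complex.exp (-((θ m : ℂ) * I * ↑t)) := by
        rw [← Complex.exp_conj]
        congr 1
        simp [map_mul, Complex.conj_I, Complex.conj_ofReal]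
      rw [map_mul, hconj]
      simp only [hG]
      have hmul : Complex.exp ((θ n : ℂ) * I * ↑t) * Complex.exp (-((θ m : ℂ) * I * ↑t))
          = Complex.exp ((((θ n - θ m : ℝ)):ℂ) * I * ↑t) := by
        rw [← Complex.exp_add]
        congr 1
        push_cast
        ring
      calc a n * Complex.exp ((θ n : ℂ) * I * ↑t) *
            ((starRingEnd ℂ) (a m) * Complex.exp (-((θ m : ℂ) * I * ↑t)))
          = (a n * (starRingEnd ℂ) (a m)) *
            (Complex.exp ((θ n : ℂ) * I * ↑t) * Complex.exp (-((θ m : ℂ) * I * ↑t))) := by ring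
        _ = (a n * (starRingEnd ℂ) (a m)) * Complex.exp ((((θ n - θ m : ℝ)):ℂ) * I * ↑t) := by
            rw [hmul]
    rw [h1, h2, ← Finset.sum_product', Complex.re_sum]
  have hint : ∀ n m, IntervalIntegrable (G n m) volume T (2*T) :=
    fun n m => (hGcont n m).intervalIntegrable _ _
  have hintre : ∀ n m : ℕ, IntervalIntegrable (fun t => (G n m t).re) volume T (2*T) :=
    fun n m => (Complex.continuous_re.comp (hGcont n m)).intervalIntegrable _ _
  calc ∫ t in T..(2*T), ‖∑ n ∈ Finset.range K, a n * Complex.exp ((θ n : ℂ) * I * t)‖^2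
      = ∫ t in T..(2*T), ∑ p ∈ Finset.range K ×ˢ Finset.range K, (G p.1 p.2 t).re := by
        apply intervalIntegral.integral_congr
        intro t _
        exact hSG t
    _ = ∑ p ∈ Finset.range K ×ˢ Finset.range K, ∫ t in T..(2*T), (G p.1 p.2 t).re :=
        intervalIntegral.integral_finset_sum (fun p _ => hintre p.1 p.2)
    _ ≤ ∑ p ∈ Finset.range K ×ˢ Finset.range K,
          ‖a p.1‖ * ‖a p.2‖ *
            (if θ p.1 = θ p.2 then T else 2/|θ p.1 - θ p.2|) := by
        apply Finset.sum_le_sum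
        rintro ⟨n, m⟩ _
        simp only
        have hre : ∫ t in T..(2*T), (G n m t).re
            = (∫ t in T..(2*T), G n m t).re := by
          have := Complex.reCLM.intervalIntegral_comp_comm (hint n m)
          simpa using this
        rw [hre]
        refine (Complex.re_le_norm _).trans ?_
        have hpull : ∫ t in T..(2*T), G n m t
            = (a n * (starRingEnd ℂ) (a m)) *
              ∫ t in T..(2*T), Complex.exp ((((θ n - θ m : ℝ)):ℂ) * I * t) := by
          simp only [hG]
          rw [← intervalIntegral.integral_const_mul]
        rw [hpull, norm_mul, norm_mul, Complex.norm_conj]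
        apply mul_le_mul_of_nonneg_left _ (by positivity)
        by_cases hθ : θ n = θ m
        · rw [if_pos hθ]
          have h0 : ∀ t : ℝ, Complex.exp ((((θ n - θ m : ℝ)):ℂ) * I * t) = 1 := by
            intro t
            rw [hθ]
            simp
          rw [intervalIntegral.integral_congr (fun t _ => h0 t),
            intervalIntegral.integral_const, show 2*T - T = T by ring]
          rw [Complex.real_smul, mul_one, Complex.norm_real, Real.norm_of_nonneg hT]
        · rw [if_neg hθ]
          set c : ℂ := ((θ n - θ m : ℝ):ℂ) * I with hc
          have hc0 : c ≠ 0 := by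
            rw [hc]
            apply mul_ne_zero _ Complex.I_ne_zero
            exact Complex.ofReal_ne_zero.2 (sub_ne_zero.2 hθ)
          have hform : ∀ t : ℝ, (((θ n - θ m : ℝ)):ℂ) * I * (t:ℂ) = c * t := by
            intro t; rw [hc]
          rw [integral_exp_mul_complex hc0, norm_div]
          have habsc : ‖c‖ = |θ n - θ m| := by
            rw [hc, norm_mul, Complex.norm_I, Complex.norm_real, Real.norm_eq_abs, mul_one]
          have h1 : ∀ s : ℝ, ‖Complex.exp (c * s)‖ = 1 := by
            intro s
            rw [Complex.norm_exp]
            have : (c * s).re = 0 := by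
              rw [hc]
              simp [Complex.mul_re]
            rw [this, Real.exp_zero]
          have h2 : ‖Complex.exp (c * ((2*T:ℝ):ℂ)) - Complex.exp (c * ((T:ℝ):ℂ))‖ ≤ 2 := by
            refine (norm_sub_le _ _).trans ?_
            rw [h1, h1]
            norm_num
          rw [habsc]
          have hpos : 0 < |θ n - θ m| := abs_pos.2 (sub_ne_zero.2 hθ)
          gcongr
    _ = ∑ n ∈ Finset.range K, ∑ m ∈ Finset.range K,
          ‖a n‖ * ‖a m‖ *
            (if θ n = θ m then T else 2/|θ n - θ m|) :=
        Finset.sum_product' _ _ (fun n m => ‖a n‖ * ‖a m‖ *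
          (if θ n = θ m then T else 2/|θ n - θ m|))

lemma dsum_bound (K : ℕ) (w : ℕ → ℝ) (σ R T : ℝ) (hσ : σ = 1 ∨ σ = -1)
    (hT : 0 ≤ T) (hR : 1 ≤ R)
    (hw0 : ∀ n, 0 ≤ w n)
    (hsupp : ∀ n : ℕ, w n ≠ 0 → R ≤ (n:ℝ)+1 ∧ (n:ℝ)+1 ≤ 2*R)
    {W : ℝ} (hW : ∑ n ∈ Finset.range K, (w n)^2 ≤ W) :
    ∑ n ∈ Finset.range K, ∑ m ∈ Finset.range K, w n * w m *
        (if σ * Real.log ((n:ℝ)+1) = σ * Real.log ((m:ℝ)+1) then T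
         else 2/|σ * Real.log ((n:ℝ)+1) - σ * Real.log ((m:ℝ)+1)|)
      ≤ W*T + 8*R*(1 + Real.log K)*W := by
  have hW0 : 0 ≤ W := le_trans (Finset.sum_nonneg (fun n _ => sq_nonneg (w n))) hW
  have hσ1 : |σ| = 1 := by rcases hσ with h | h <;> simp [h]
  have hσ0 : σ ≠ 0 := by rcases hσ with h | h <;> simp [h]
  set L : ℕ → ℝ := fun n => Real.log ((n:ℝ)+1) with hL
  set F : ℕ → ℕ → ℝ := fun n m => w n * w m *
      (if σ * L n = σ * L m then T else 2/|σ * L n - σ * L m|) with hF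
  set g : ℕ → ℕ → ℝ := fun n m => if n = m then 0 else 1/|(n:ℝ)-(m:ℝ)| with hg
  have hgsym : ∀ n m, g n m = g m n := by
    intro n m
    rw [hg]
    simp only [eq_comm, abs_sub_comm]
  have hg0 : ∀ n m, 0 ≤ g n m := by
    intro n m
    rw [hg]
    dsimp only
    split
    · exact le_refl 0
    · positivity
  -- split into diagonal and off-diagonal
  have hsplit : ∀ n m : ℕ, F n m
      = (if n = m then F n m else 0) + (if n = m then 0 else F n m) := by
    intro n m
    split <;> simp
  -- key off-diagonal term bound
  have hoff : ∀ n m : ℕ, n ≠ m → F n m ≤ (w n^2 + w m^2) * (2*R) * g n m := by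
    intro n m hnm
    by_cases hzero : w n * w m = 0
    · rw [hF]
      dsimp only
      rw [hzero, zero_mul]
      have : 0 ≤ (w n^2 + w m^2) * (2*R) * g n m := by
        apply mul_nonneg (mul_nonneg (by positivity) (by linarith)) (hg0 n m)
      exact this
    · have hwn := hsupp n (fun h => hzero (by rw [h, zero_mul]))
      have hwm := hsupp m (fun h => hzero (by rw [h, mul_zero]))
      -- |L n - L m| ≥ |n - m| / (2R)
      have key : ∀ k l : ℕ, (l:ℝ) < (k:ℝ) → (k:ℝ)+1 ≤ 2*R →
          ((k:ℝ)-(l:ℝ))/(2*R) ≤ L k - L l := by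
        intro k l hlk hk2R
        have hkpos : (0:ℝ) < (k:ℝ)+1 := by positivity
        have hlpos : (0:ℝ) < (l:ℝ)+1 := by positivity
        have h1 : L l - L k ≤ ((l:ℝ)+1)/((k:ℝ)+1) - 1 := by
          have := Real.log_le_sub_one_of_pos (div_pos hlpos hkpos)
          rwa [Real.log_div (ne_of_gt hlpos) (ne_of_gt hkpos)] at this
        have h2 : ((k:ℝ)-(l:ℝ))/((k:ℝ)+1) ≤ L k - L l := by
          have : 1 - ((l:ℝ)+1)/((k:ℝ)+1) = ((k:ℝ)-(l:ℝ))/((k:ℝ)+1) := by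
            field_simp
            ring
          linarith [h1, this]
        refine le_trans ?_ h2
        exact div_le_div_of_nonneg_left (by linarith) hkpos hk2R
      have hdist : |(n:ℝ)-(m:ℝ)|/(2*R) ≤ |L n - L m| := by
        rcases lt_or_gt_of_ne hnm with h | h
        · have h' : (n:ℝ) < (m:ℝ) := by exact_mod_cast h
          have := key m n h' hwm.2
          rw [abs_sub_comm ((n:ℝ)) ((m:ℝ)), abs_of_pos (by linarith),
            abs_sub_comm (L n) (L m)]
          refine le_trans this (le_abs_self _)
        · have h' : (m:ℝ) < (n:ℝ) := by exact_mod_cast h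
          have := key n m h' hwn.2
          rw [abs_of_pos (by linarith)]
          refine le_trans this (le_abs_self _)
      have hLne : σ * L n ≠ σ * L m := by
        intro hcon
        have hLnm : L n = L m := mul_left_cancel₀ hσ0 hcon
        have h0 : (0:ℝ) < |(n:ℝ)-(m:ℝ)| := by
          rw [abs_pos, sub_ne_zero]
          exact_mod_cast hnm
        rw [hLnm, sub_self, abs_zero] at hdist
        have : (0:ℝ) < |(n:ℝ)-(m:ℝ)|/(2*R) := div_pos h0 (by linarith)
        linarith
      rw [hF]
      dsimp only
      rw [if_neg hLne]
      have habs : |σ * L n - σ * L m| = |L n - L m| := by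
        rw [show σ * L n - σ * L m = σ * (L n - L m) by ring, abs_mul, hσ1, one_mul]
      rw [habs]
      have hnm0 : (0:ℝ) < |(n:ℝ)-(m:ℝ)| := by
        rw [abs_pos, sub_ne_zero]
        exact_mod_cast hnm
      have hLpos : 0 < |L n - L m| := lt_of_lt_of_le (div_pos hnm0 (by linarith)) hdist
      have h2div : 2/|L n - L m| ≤ 2*(2*R)/|(n:ℝ)-(m:ℝ)| := by
        rw [div_le_div_iff₀ hLpos hnm0]
        calc 2 * |(n:ℝ)-(m:ℝ)| = 2*(2*R) * (|(n:ℝ)-(m:ℝ)|/(2*R)) := by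
              field_simp
            _ ≤ 2*(2*R) * |L n - L m| := by
              apply mul_le_mul_of_nonneg_left hdist (by linarith)
            _ = 2*(2*R)*|L n - L m| := rfl
      have hwnm : w n * w m * (2/|L n - L m|) ≤ w n * w m * (2*(2*R)/|(n:ℝ)-(m:ℝ)|) :=
        mul_le_mul_of_nonneg_left h2div (mul_nonneg (hw0 n) (hw0 m))
      refine hwnm.trans ?_
      rw [hg]
      dsimp only
      rw [if_neg hnm]
      have h1 : w n * w m * (2*(2*R)/|(n:ℝ)-(m:ℝ)|)
          = (2 * (w n * w m)) * ((2*R) * (1/|(n:ℝ)-(m:ℝ)|)) := by ring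
      have h2 : (w n^2 + w m^2) * (2*R) * (1/|(n:ℝ)-(m:ℝ)|)
          = (w n^2 + w m^2) * ((2*R) * (1/|(n:ℝ)-(m:ℝ)|)) := by ring
      rw [h1, h2]
      apply mul_le_mul_of_nonneg_right ?_ (by positivity)
      have := two_mul_le_add_sq (w n) (w m)
      linarith
  -- assemble
  have hlogK : 0 ≤ 1 + Real.log K := by
    rcases Nat.eq_zero_or_pos K with h | h
    · simp [h]
    · have : (1:ℝ) ≤ (K:ℝ) := by exact_mod_cast h
      have := Real.log_nonneg this
      linarith
  have hA : ∀ n ∈ Finset.range K, ∑ m ∈ Finset.range K, g n m ≤ 2*(1 + Real.log K) := by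
    intro n hn
    rw [Finset.mem_range] at hn
    have := inv_dist_sum K n hn
    rw [hg]
    exact this
  have hAbound : ∑ n ∈ Finset.range K, w n^2 * ∑ m ∈ Finset.range K, g n m
      ≤ 2*(1 + Real.log K) * W := by
    calc ∑ n ∈ Finset.range K, w n^2 * ∑ m ∈ Finset.range K, g n m
        ≤ ∑ n ∈ Finset.range K, w n^2 * (2*(1 + Real.log K)) := by
          apply Finset.sum_le_sum
          intro n hn
          exact mul_le_mul_of_nonneg_left (hA n hn) (sq_nonneg _)
      _ = (∑ n ∈ Finset.range K, w n^2) * (2*(1 + Real.log K)) := by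
          rw [← Finset.sum_mul]
      _ ≤ W * (2*(1 + Real.log K)) := by
          apply mul_le_mul_of_nonneg_right hW (by linarith)
      _ = 2*(1 + Real.log K) * W := by ring
  calc ∑ n ∈ Finset.range K, ∑ m ∈ Finset.range K, F n m
      = (∑ n ∈ Finset.range K, ∑ m ∈ Finset.range K, (if n = m then F n m else 0))
        + ∑ n ∈ Finset.range K, ∑ m ∈ Finset.range K, (if n = m then 0 else F n m) := by
        rw [← Finset.sum_add_distrib]
        apply Finset.sum_congr rfl
        intro n _
        rw [← Finset.sum_add_distrib]
        apply Finset.sum_congr rfl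
        intro m _
        exact hsplit n m
    _ ≤ W*T + 8*R*(1 + Real.log K)*W := by
        have hDiag : ∑ n ∈ Finset.range K, ∑ m ∈ Finset.range K, (if n = m then F n m else 0)
            ≤ W*T := by
          have h1 : ∀ n ∈ Finset.range K,
              ∑ m ∈ Finset.range K, (if n = m then F n m else 0) = w n^2 * T := by
            intro n hn
            rw [Finset.sum_ite_eq (Finset.range K) n (F n), if_pos hn, hF]
            dsimp only
            rw [if_pos rfl]
            ring
          rw [Finset.sum_congr rfl h1, ← Finset.sum_mul]
          exact mul_le_mul_of_nonneg_right hW hT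
        have hOff : ∑ n ∈ Finset.range K, ∑ m ∈ Finset.range K, (if n = m then 0 else F n m)
            ≤ 8*R*(1 + Real.log K)*W := by
          have step1 : ∑ n ∈ Finset.range K, ∑ m ∈ Finset.range K, (if n = m then 0 else F n m)
              ≤ ∑ n ∈ Finset.range K, ∑ m ∈ Finset.range K,
                  ((2*R) * (w n^2 * g n m) + (2*R) * (w m^2 * g n m)) := by
            apply Finset.sum_le_sum
            intro n _
            apply Finset.sum_le_sum
            intro m _
            by_cases hnm : n = m
            · rw [if_pos hnm]
              have : g n m = 0 := by rw [hg]; dsimp only; rw [if_pos hnm]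
              rw [this]
              ring_nf
              exact le_refl 0
            · rw [if_neg hnm]
              have := hoff n m hnm
              calc F n m ≤ (w n^2 + w m^2) * (2*R) * g n m := this
                _ = (2*R) * (w n^2 * g n m) + (2*R) * (w m^2 * g n m) := by ring
          have step2 : ∑ n ∈ Finset.range K, ∑ m ∈ Finset.range K,
                ((2*R) * (w n^2 * g n m) + (2*R) * (w m^2 * g n m))
              = (2*R) * (∑ n ∈ Finset.range K, w n^2 * ∑ m ∈ Finset.range K, g n m)
                + (2*R) * (∑ n ∈ Finset.range K, ∑ m ∈ Finset.range K, w m^2 * g n m) := by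
            have hinner : ∀ n : ℕ, ∑ m ∈ Finset.range K,
                  ((2*R) * (w n^2 * g n m) + (2*R) * (w m^2 * g n m))
                = (2*R) * (w n^2 * ∑ m ∈ Finset.range K, g n m)
                  + (2*R) * (∑ m ∈ Finset.range K, w m^2 * g n m) := by
              intro n
              rw [Finset.sum_add_distrib]
              congr 1
              · rw [← Finset.mul_sum, ← Finset.mul_sum]
              · rw [← Finset.mul_sum]
            rw [Finset.sum_congr rfl (fun n _ => hinner n), Finset.sum_add_distrib,
              ← Finset.mul_sum, ← Finset.mul_sum]
          have step3 : ∑ n ∈ Finset.range K, ∑ m ∈ Finset.range K, w m^2 * g n m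
              = ∑ m ∈ Finset.range K, w m^2 * ∑ n ∈ Finset.range K, g m n := by
            rw [Finset.sum_comm]
            apply Finset.sum_congr rfl
            intro m _
            rw [Finset.mul_sum]
            apply Finset.sum_congr rfl
            intro n _
            rw [hgsym n m]
          have h2R : (0:ℝ) ≤ 2*R := by linarith
          calc ∑ n ∈ Finset.range K, ∑ m ∈ Finset.range K, (if n = m then 0 else F n m)
              ≤ ∑ n ∈ Finset.range K, ∑ m ∈ Finset.range K,
                  ((2*R) * (w n^2 * g n m) + (2*R) * (w m^2 * g n m)) := step1
            _ = (2*R) * (∑ n ∈ Finset.range K, w n^2 * ∑ m ∈ Finset.range K, g n m)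
                + (2*R) * (∑ n ∈ Finset.range K, ∑ m ∈ Finset.range K, w m^2 * g n m) := step2
            _ = (2*R) * (∑ n ∈ Finset.range K, w n^2 * ∑ m ∈ Finset.range K, g n m)
                + (2*R) * (∑ m ∈ Finset.range K, w m^2 * ∑ n ∈ Finset.range K, g m n) := by
                rw [step3]
            _ ≤ (2*R) * (2*(1 + Real.log K) * W) + (2*R) * (2*(1 + Real.log K) * W) :=
                add_le_add (mul_le_mul_of_nonneg_left hAbound h2R)
                  (mul_le_mul_of_nonneg_left hAbound h2R)
            _ = 8*R*(1 + Real.log K)*W := by ring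
        exact add_le_add hDiag hOff


lemma cpow_split_neg (k : ℕ) (t : ℝ) (v : ℂ) :
    ((k+1 : ℕ) : ℂ) ^ (v - I*t) = ((k+1 : ℕ) : ℂ) ^ v *
      Complex.exp (((-1 * Real.log ((k:ℝ)+1) : ℝ) : ℂ) * I * t) := by
  have hz : ((k+1 : ℕ) : ℂ) ≠ 0 := Nat.cast_ne_zero.2 (Nat.succ_ne_zero k)
  rw [sub_eq_add_neg, Complex.cpow_add _ _ hz]
  congr 1
  rw [Complex.cpow_def_of_ne_zero hz]
  congr 1
  rw [show ((k+1 : ℕ) : ℂ) = (((k:ℝ)+1 : ℝ) : ℂ) by push_cast; ring,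
    ← Complex.ofReal_log (by positivity)]
  push_cast
  ring

lemma cpow_split_pos (k : ℕ) (t : ℝ) (v : ℂ) :
    ((k+1 : ℕ) : ℂ) ^ (v + I*t) = ((k+1 : ℕ) : ℂ) ^ v *
      Complex.exp (((1 * Real.log ((k:ℝ)+1) : ℝ) : ℂ) * I * t) := by
  have hz : ((k+1 : ℕ) : ℂ) ≠ 0 := Nat.cast_ne_zero.2 (Nat.succ_ne_zero k)
  rw [Complex.cpow_add _ _ hz]
  congr 1
  rw [Complex.cpow_def_of_ne_zero hz]
  congr 1
  rw [show ((k+1 : ℕ) : ℂ) = (((k:ℝ)+1 : ℝ) : ℂ) by push_cast; ring,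
    ← Complex.ofReal_log (by positivity)]
  push_cast
  ring

lemma L2_final (K : ℕ) (a : ℕ → ℂ) (w : ℕ → ℝ) (σ R T : ℝ) {W : ℝ}
    (hσ : σ = 1 ∨ σ = -1) (hT : 0 ≤ T) (hR : 1 ≤ R)
    (hwa : ∀ n, ‖a n‖ ≤ w n)
    (hsupp : ∀ n : ℕ, w n ≠ 0 → R ≤ (n:ℝ)+1 ∧ (n:ℝ)+1 ≤ 2*R)
    (hW : ∑ n ∈ Finset.range K, (w n)^2 ≤ W) :
    ∫ t in T..(2*T), ‖∑ n ∈ Finset.range K,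
        a n * Complex.exp (((σ * Real.log ((n:ℝ)+1) : ℝ) : ℂ) * I * t)‖^2
      ≤ W*T + 8*R*(1 + Real.log K)*W := by
  have hw0 : ∀ n, 0 ≤ w n := fun n => le_trans (norm_nonneg _) (hwa n)
  refine le_trans (mvt_bound K a (fun n => σ * Real.log ((n:ℝ)+1)) T hT) ?_
  refine le_trans ?_ (dsum_bound K w σ R T hσ hT hR hw0 hsupp hW)
  apply Finset.sum_le_sum
  intro n _
  apply Finset.sum_le_sum
  intro m _
  have hc : 0 ≤ (if σ * Real.log ((n:ℝ)+1) = σ * Real.log ((m:ℝ)+1) then T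
      else 2/|σ * Real.log ((n:ℝ)+1) - σ * Real.log ((m:ℝ)+1)|) := by
    split
    · exact hT
    · positivity
  exact mul_le_mul_of_nonneg_right
    (mul_le_mul (hwa n) (hwa m) (norm_nonneg _) (hw0 n)) hc

lemma sum_range_shift (f : ℕ → ℝ) (K : ℕ) :
    ∑ n ∈ Finset.range K, f (n+1) = ∑ k ∈ Finset.Icc 1 K, f k := by
  have h : Finset.Icc 1 K = Finset.Ico 1 (K+1) := by
    rw [Finset.Ico_add_one_right_eq_Icc]
  rw [h, Finset.sum_Ico_eq_sum_range]
  simp only [Nat.add_sub_cancel]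
  exact Finset.sum_congr rfl (fun i _ => by rw [Nat.add_comm])
section Main
open Complex Real MeasureTheory

set_option maxHeartbeats 3200000 in
/-- Bound on `R₁` from the proof of Lemma 4.5. -/
theorem stmt_19
    (lam : ℕ → ℝ) (hlam1 : lam 1 = 1)
    (C₀ : ℝ) (hRS : ∀ x : ℝ, 1 ≤ x → ∑ n ∈ Finset.Icc 1 ⌊x⌋₊, (lam n) ^ 2 ≤ C₀ * x)
    (A : ℕ → ℝ) (V₁ : ℝ → ℝ) (hV₁ : ContDiff ℝ (⊤ : ℕ∞) V₁)
    (hV₁supp : ∀ x : ℝ, x ∉ Set.Icc (1:ℝ) 2 → V₁ x = 0)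
    (δ : ℝ) (hδ : 0 < δ) :
    ∃ ε₀ C : ℝ, 0 < ε₀ ∧ ∀ ε : ℝ, 0 < ε → ε ≤ ε₀ →
      ∀ T : ℝ, 2 ≤ T → ∀ Δ : ℝ, 1 ≤ Δ → Δ ≤ T ^ (1/2 - ε) →
      ∀ V : ℝ → ℝ, ContDiff ℝ (⊤ : ℕ∞) V →
        (∀ x : ℝ, x ∉ Set.Icc (1:ℝ) 2 → V x = 0) →
        (∀ (i : ℕ) (x : ℝ), |iteratedDeriv i V x| ≤ A i * Δ ^ i) →
      ∀ N M : ℝ, 1 ≤ N → N ≤ T ^ (1 + ε) → 1 ≤ M → M ≤ T ^ (1/2 + ε) →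
      ∀ u : ℂ, u.re = ε → |u.im| ≤ T ^ ε →
      ‖(((T ^ (-(3:ℝ)/4) : ℝ) : ℂ) * ∫ t : ℝ, (V (t / T) : ℂ)
          * (∑' n : ℕ, (lam (n+1) : ℂ)
              * ((n+1 : ℕ) : ℂ) ^ (-(1/2 : ℂ) - I * t - u) * (V₁ ((n+1 : ℝ) / N) : ℂ))
          * (∑' m : ℕ, ((m+1 : ℕ) : ℂ) ^ (-(1/2 : ℂ) + I * t - u) * (V₁ ((m+1 : ℝ) / M) : ℂ))
          * (t : ℂ) ^ (3 * u / 2))‖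
        ≤ C * T ^ (1/4 + δ) := by
  -- C₀ ≥ 1
  have hC₀ : 1 ≤ C₀ := by
    have h := hRS 1 le_rfl
    rw [Nat.floor_one] at h
    simp [hlam1] at h
    linarith
  -- bound for V₁
  have hV₁cs : HasCompactSupport V₁ := HasCompactSupport.intro isCompact_Icc hV₁supp
  obtain ⟨B₀, hB₀⟩ := hV₁cs.exists_bound_of_continuous hV₁.continuous
  have hB : ∀ x, |V₁ x| ≤ max B₀ 1 := fun x =>
    le_trans (by simpa using hB₀ x) (le_max_left _ _)
  set B : ℝ := max B₀ 1 with hBdef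
  have hB1 : (1:ℝ) ≤ B := le_max_right _ _
  have hB0 : (0:ℝ) < B := lt_of_lt_of_le one_pos hB1
  refine ⟨min (δ/5) 1, 3*(|A 0|+1)*((2*C₀*B^2 + 2*B^2)*(1+80/δ)),
    lt_min (by positivity) one_pos, ?_⟩
  intro ε hε hεle T hT2 Δ hΔ1 hΔ2 V hVsm hVsupp hVder N M hN1 hNle hM1 hMle u hure huim
  have hε1 : ε ≤ 1 := le_trans hεle (min_le_right _ _)
  have hεδ : ε ≤ δ/5 := le_trans hεle (min_le_left _ _)
  have hT1 : (1:ℝ) ≤ T := by linarith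
  have hT0 : (0:ℝ) < T := by linarith
  have hN0 : (0:ℝ) < N := by linarith
  have hM0 : (0:ℝ) < M := by linarith
  have hA0 : ∀ x, |V x| ≤ A 0 := by
    intro x
    have := hVder 0 x
    simpa [iteratedDeriv_zero] using this
  have hA0n : 0 ≤ A 0 := le_trans (abs_nonneg _) (hA0 0)
  -- coefficient functions
  obtain ⟨a₁, ha₁⟩ : ∃ f : ℕ → ℂ, f = fun n => (lam (n+1) : ℂ)
      * ((n+1 : ℕ) : ℂ) ^ (-(1/2 : ℂ) - u) * (V₁ ((n+1 : ℝ) / N) : ℂ) := ⟨_, rfl⟩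
  obtain ⟨a₂, ha₂⟩ : ∃ f : ℕ → ℂ, f = fun m =>
      ((m+1 : ℕ) : ℂ) ^ (-(1/2 : ℂ) - u) * (V₁ ((m+1 : ℝ) / M) : ℂ) := ⟨_, rfl⟩
  obtain ⟨S₁, hS₁⟩ : ∃ f : ℝ → ℂ, f = fun t : ℝ => ∑ n ∈ Finset.range ⌊2*N⌋₊,
      a₁ n * Complex.exp ((((-1) * Real.log ((n:ℝ)+1) : ℝ) : ℂ) * I * t) := ⟨_, rfl⟩
  obtain ⟨S₂, hS₂⟩ : ∃ f : ℝ → ℂ, f = fun t : ℝ => ∑ m ∈ Finset.range ⌊2*M⌋₊,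
      a₂ m * Complex.exp (((1 * Real.log ((m:ℝ)+1) : ℝ) : ℂ) * I * t) := ⟨_, rfl⟩
  -- rewrite the tsums as finite sums
  have htsum1 : ∀ t : ℝ, (∑' n : ℕ, (lam (n+1) : ℂ)
      * ((n+1 : ℕ) : ℂ) ^ (-(1/2 : ℂ) - I * t - u) * (V₁ ((n+1 : ℝ) / N) : ℂ)) = S₁ t := by
    intro t
    rw [hS₁]
    have hvanish : ∀ n ∉ Finset.range ⌊2*N⌋₊, (lam (n+1) : ℂ)
        * ((n+1 : ℕ) : ℂ) ^ (-(1/2 : ℂ) - I * t - u) * (V₁ ((n+1 : ℝ) / N) : ℂ) = 0 := by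
      intro n hn
      rw [Finset.mem_range, not_lt] at hn
      have h1 : 2*N < (⌊2*N⌋₊:ℝ)+1 := Nat.lt_floor_add_one _
      have h2 : (⌊2*N⌋₊:ℝ) ≤ (n:ℝ) := Nat.cast_le.2 hn
      have hx : ((n:ℝ)+1)/N ∉ Set.Icc (1:ℝ) 2 := by
        intro hmem
        have h3 := hmem.2
        rw [div_le_iff₀ hN0] at h3
        linarith
      rw [hV₁supp _ hx]
      simp
    rw [tsum_eq_sum hvanish]
    apply Finset.sum_congr rfl
    intro n _
    rw [ha₁]
    simp only
    rw [show -(1/2 : ℂ) - I*(t:ℂ) - u = (-(1/2 : ℂ) - u) - I*(t:ℂ) by ring,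
      cpow_split_neg n t (-(1/2 : ℂ) - u)]
    ring
  have htsum2 : ∀ t : ℝ, (∑' m : ℕ,
      ((m+1 : ℕ) : ℂ) ^ (-(1/2 : ℂ) + I * t - u) * (V₁ ((m+1 : ℝ) / M) : ℂ)) = S₂ t := by
    intro t
    rw [hS₂]
    have hvanish : ∀ m ∉ Finset.range ⌊2*M⌋₊,
        ((m+1 : ℕ) : ℂ) ^ (-(1/2 : ℂ) + I * t - u) * (V₁ ((m+1 : ℝ) / M) : ℂ) = 0 := by
      intro m hm
      rw [Finset.mem_range, not_lt] at hm
      have h1 : 2*M < (⌊2*M⌋₊:ℝ)+1 := Nat.lt_floor_add_one _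
      have h2 : (⌊2*M⌋₊:ℝ) ≤ (m:ℝ) := Nat.cast_le.2 hm
      have hx : ((m:ℝ)+1)/M ∉ Set.Icc (1:ℝ) 2 := by
        intro hmem
        have h3 := hmem.2
        rw [div_le_iff₀ hM0] at h3
        linarith
      rw [hV₁supp _ hx]
      simp
    rw [tsum_eq_sum hvanish]
    apply Finset.sum_congr rfl
    intro m _
    rw [ha₂]
    simp only
    rw [show -(1/2 : ℂ) + I*(t:ℂ) - u = (-(1/2 : ℂ) - u) + I*(t:ℂ) by ring,
      cpow_split_pos m t (-(1/2 : ℂ) - u)]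
    ring
  simp only [htsum1, htsum2]
  rw [norm_mul, Complex.norm_real, Real.norm_of_nonneg (Real.rpow_nonneg hT0.le _)]
  -- continuity facts
  have hS₁c : Continuous S₁ := by
    rw [hS₁]
    exact continuous_finset_sum _ (fun n _ => continuous_const.mul
      (Complex.continuous_exp.comp
        ((continuous_const.mul continuous_const).mul Complex.continuous_ofReal)))
  have hS₂c : Continuous S₂ := by
    rw [hS₂]
    exact continuous_finset_sum _ (fun n _ => continuous_const.mul
      (Complex.continuous_exp.comp
        ((continuous_const.mul continuous_const).mul Complex.continuous_ofReal)))
  have hGc : ContinuousOn (fun t : ℝ => (V (t / T) : ℂ) * S₁ t * S₂ t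
      * (t : ℂ) ^ (3 * u / 2)) (Set.Icc T (2*T)) := by
    have hVc : Continuous (fun t : ℝ => (V (t / T) : ℂ)) :=
      Complex.continuous_ofReal.comp (hVsm.continuous.comp (continuous_id.div_const T))
    have hcpow : ContinuousOn (fun t : ℝ => (t:ℂ) ^ (3*u/2)) (Set.Icc T (2*T)) := by
      intro t ht
      have htpos : 0 < t := lt_of_lt_of_le hT0 ht.1
      apply ContinuousAt.continuousWithinAt
      exact (continuousAt_cpow_const
        (Complex.mem_slitPlane_iff.2 (Or.inl (by simpa using htpos)))).comp
        Complex.continuous_ofReal.continuousAt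
    exact ((hVc.continuousOn.mul hS₁c.continuousOn).mul hS₂c.continuousOn).mul hcpow
  -- numeric helper
  have hlogT0 : 0 ≤ Real.log T := Real.log_nonneg hT1
  have hl2T : Real.log 2 ≤ Real.log T := Real.log_le_log (by norm_num) hT2
  have hlog2lb : (0.6931471803:ℝ) < Real.log 2 := Real.log_two_gt_d9
  have hnum : ∀ (W R : ℝ) (K : ℕ), 0 ≤ W → 1 ≤ R → (K:ℝ) ≤ 2*R → R ≤ T^(1+ε) →
      W*T + 8*R*(1 + Real.log K)*W ≤ W*(1+80/δ)*T^(1+ε+δ/2) := by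
    intro W R K hW hR hK hRT
    have hlogK : 1 + Real.log K ≤ 5 * Real.log T := by
      have hKT : (K:ℝ) ≤ 2*T^(1+ε) := le_trans hK (by linarith)
      have h2 : Real.log K ≤ Real.log 2 + (1+ε)*Real.log T := by
        rcases Nat.eq_zero_or_pos K with h0 | hpos
        · rw [h0]
          simp only [Nat.cast_zero, Real.log_zero]
          positivity
        · have hKpos : (0:ℝ) < (K:ℝ) := by exact_mod_cast hpos
          have := Real.log_le_log hKpos hKT
          rwa [Real.log_mul two_ne_zero (by positivity), Real.log_rpow hT0] at this
      have h1le : 1 ≤ 2*Real.log T := by nlinarith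
      nlinarith
    have hlogTle : Real.log T ≤ (2/δ)*T^(δ/2) := by
      have h1 : Real.log (T^(δ/2)) = (δ/2)*Real.log T := Real.log_rpow hT0 _
      have h2 : Real.log (T^(δ/2)) ≤ T^(δ/2) := by
        have := Real.log_le_sub_one_of_pos (show (0:ℝ) < T^(δ/2) by positivity)
        linarith
      rw [h1] at h2
      rw [show (2/δ)*T^(δ/2) = (2/δ)*(T^(δ/2)) by ring]
      calc Real.log T = (2/δ)*((δ/2)*Real.log T) := by field_simp
        _ ≤ (2/δ)*T^(δ/2) := mul_le_mul_of_nonneg_left h2 (by positivity)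
    have hTpow : T ≤ T^(1+ε+δ/2) := by
      nth_rewrite 1 [← Real.rpow_one T]
      exact Real.rpow_le_rpow_of_exponent_le hT1 (by linarith)
    have hlogK0 : 0 ≤ 1 + Real.log K := by
      have : 0 ≤ Real.log (K:ℝ) := by
        rcases Nat.eq_zero_or_pos K with h0 | hpos
        · simp [h0]
        · exact Real.log_nonneg (by exact_mod_cast hpos)
      linarith
    have hmain : 8*R*(1 + Real.log K) ≤ (80/δ)*T^(1+ε+δ/2) := by
      calc 8*R*(1 + Real.log K) ≤ 8*T^(1+ε)*(5*((2/δ)*T^(δ/2))) := by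
            apply mul_le_mul (by nlinarith [Real.rpow_nonneg hT0.le (1+ε)]) ?_ hlogK0 ?_
            · exact le_trans hlogK (by nlinarith [hlogT0])
            · positivity
        _ = (80/δ)*(T^(1+ε)*T^(δ/2)) := by ring
        _ = (80/δ)*T^(1+ε+δ/2) := by rw [← Real.rpow_add hT0]
    calc W*T + 8*R*(1 + Real.log K)*W
        ≤ W*T^(1+ε+δ/2) + ((80/δ)*T^(1+ε+δ/2))*W := by
          apply add_le_add (mul_le_mul_of_nonneg_left hTpow hW)
            (mul_le_mul_of_nonneg_right hmain hW)
      _ = W*(1+80/δ)*T^(1+ε+δ/2) := by ring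
  -- interval integral conversion
  have hicc : ∀ g : ℝ → ℝ, ∫ t in Set.Icc T (2*T), g t = ∫ t in T..(2*T), g t := by
    intro g
    rw [intervalIntegral.integral_of_le (by linarith), integral_Icc_eq_integral_Ioc]
  -- L² bound for S₁
  have hI₁ : ∫ t in Set.Icc T (2*T), ‖S₁ t‖^2
      ≤ (2*C₀*B^2)*(1+80/δ) * T^(1+ε+δ/2) := by
    obtain ⟨w₁, hw₁⟩ : ∃ w : ℕ → ℝ, w = fun n : ℕ => if N ≤ (n:ℝ)+1 ∧ (n:ℝ)+1 ≤ 2*N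
        then B * |lam (n+1)| * (((n:ℝ)+1)) ^ (-(1/2) : ℝ) else 0 := ⟨_, rfl⟩
    have hwa₁ : ∀ n : ℕ, ‖a₁ n‖ ≤ w₁ n := by
      intro n
      rw [ha₁, hw₁]
      simp only
      by_cases hc : N ≤ (n:ℝ)+1 ∧ (n:ℝ)+1 ≤ 2*N
      · rw [if_pos hc, norm_mul, norm_mul]
        simp only [Complex.norm_real, Real.norm_eq_abs]
        have hx1 : (1:ℝ) ≤ (n:ℝ)+1 := by
          have := Nat.cast_nonneg (α := ℝ) n
          linarith
        have hcp : ‖((n+1:ℕ):ℂ) ^ (-(1/2:ℂ) - u)‖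
            = ((n:ℝ)+1) ^ ((-(1/2:ℂ) - u).re) := by
          rw [show ((n+1:ℕ):ℂ) = ((((n:ℝ)+1):ℝ):ℂ) by push_cast; ring]
          exact Complex.norm_cpow_eq_rpow_re_of_pos (by positivity) _
        rw [hcp]
        have hre : (-(1/2:ℂ) - u).re = -(1/2) - ε := by
          rw [Complex.sub_re, hure]
          norm_num
        rw [hre]
        have h1 : ((n:ℝ)+1) ^ (-(1/2) - ε) ≤ ((n:ℝ)+1) ^ (-(1/2):ℝ) :=
          Real.rpow_le_rpow_of_exponent_le hx1 (by linarith)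
        calc |lam (n+1)| * ((n:ℝ)+1) ^ (-(1/2) - ε) * |V₁ (((n:ℝ)+1) / N)|
            ≤ |lam (n+1)| * ((n:ℝ)+1) ^ (-(1/2):ℝ) * B := by
              apply mul_le_mul (mul_le_mul_of_nonneg_left h1 (abs_nonneg _)) (hB _)
                (abs_nonneg _) (by positivity)
          _ = B * |lam (n+1)| * ((n:ℝ)+1) ^ (-(1/2):ℝ) := by ring
      · rw [if_neg hc]
        have hx : ((n:ℝ)+1)/N ∉ Set.Icc (1:ℝ) 2 := by
          intro hmem
          apply hc
          constructor
          · have := hmem.1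
            rw [le_div_iff₀ hN0] at this
            linarith
          · have := hmem.2
            rw [div_le_iff₀ hN0] at this
            linarith
        rw [hV₁supp _ hx]
        simp
    have hsupp₁ : ∀ n : ℕ, w₁ n ≠ 0 → N ≤ (n:ℝ)+1 ∧ (n:ℝ)+1 ≤ 2*N := by
      intro n h
      rw [hw₁] at h
      simp only at h
      by_cases hc : N ≤ (n:ℝ)+1 ∧ (n:ℝ)+1 ≤ 2*N
      · exact hc
      · rw [if_neg hc] at h
        exact absurd rfl h
    have hW₁ : ∑ n ∈ Finset.range ⌊2*N⌋₊, (w₁ n)^2 ≤ 2*C₀*B^2 := by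
      have hterm : ∀ n ∈ Finset.range ⌊2*N⌋₊, (w₁ n)^2 ≤ (B^2/N) * lam (n+1)^2 := by
        intro n _
        rw [hw₁]
        simp only
        by_cases hc : N ≤ (n:ℝ)+1 ∧ (n:ℝ)+1 ≤ 2*N
        · rw [if_pos hc]
          have hx0 : (0:ℝ) < (n:ℝ)+1 := by positivity
          have hrp : ((((n:ℝ)+1)) ^ (-(1/2):ℝ))^2 = (((n:ℝ)+1))⁻¹ := by
            rw [← Real.rpow_natCast ((((n:ℝ)+1)) ^ (-(1/2):ℝ)) 2,
              ← Real.rpow_mul hx0.le]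
            norm_num
            exact Real.rpow_neg_one _
          calc (B * |lam (n+1)| * (((n:ℝ)+1)) ^ (-(1/2):ℝ))^2
              = B^2 * lam (n+1)^2 * ((((n:ℝ)+1)) ^ (-(1/2):ℝ))^2 := by
                rw [mul_pow, mul_pow, _root_.sq_abs]
            _ = B^2 * lam (n+1)^2 * (((n:ℝ)+1))⁻¹ := by rw [hrp]
            _ ≤ B^2 * lam (n+1)^2 * N⁻¹ := by
                apply mul_le_mul_of_nonneg_left (inv_anti₀ hN0 hc.1) (by positivity)
            _ = (B^2/N) * lam (n+1)^2 := by ring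
        · rw [if_neg hc, zero_pow two_ne_zero]
          positivity
      calc ∑ n ∈ Finset.range ⌊2*N⌋₊, (w₁ n)^2
          ≤ ∑ n ∈ Finset.range ⌊2*N⌋₊, (B^2/N) * lam (n+1)^2 := Finset.sum_le_sum hterm
        _ = (B^2/N) * ∑ n ∈ Finset.range ⌊2*N⌋₊, lam (n+1)^2 := by rw [← Finset.mul_sum]
        _ = (B^2/N) * ∑ k ∈ Finset.Icc 1 ⌊2*N⌋₊, lam k^2 := by
            rw [sum_range_shift (fun k => lam k^2) ⌊2*N⌋₊]
        _ ≤ (B^2/N) * (C₀ * (2*N)) := by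
            apply mul_le_mul_of_nonneg_left (hRS (2*N) (by linarith)) (by positivity)
        _ = 2*C₀*B^2 := by field_simp
    have key := L2_final ⌊2*N⌋₊ a₁ w₁ (-1) N T (Or.inr rfl) hT0.le hN1 hwa₁ hsupp₁ hW₁
    calc ∫ t in Set.Icc T (2*T), ‖S₁ t‖^2 = ∫ t in T..(2*T), ‖S₁ t‖^2 := hicc _
      _ ≤ (2*C₀*B^2)*T + 8*N*(1+Real.log ⌊2*N⌋₊)*(2*C₀*B^2) := by
          simp only [hS₁]
          exact key
      _ ≤ (2*C₀*B^2)*(1+80/δ) * T^(1+ε+δ/2) := by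
          have := hnum (2*C₀*B^2) N ⌊2*N⌋₊ (by positivity) hN1
            (le_trans (Nat.floor_le (by positivity)) le_rfl) hNle
          linarith [this]
  -- L² bound for S₂
  have hI₂ : ∫ t in Set.Icc T (2*T), ‖S₂ t‖^2
      ≤ (2*B^2)*(1+80/δ) * T^(1+ε+δ/2) := by
    obtain ⟨w₂, hw₂⟩ : ∃ w : ℕ → ℝ, w = fun m : ℕ => if M ≤ (m:ℝ)+1 ∧ (m:ℝ)+1 ≤ 2*M
        then B * (((m:ℝ)+1)) ^ (-(1/2) : ℝ) else 0 := ⟨_, rfl⟩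
    have hwa₂ : ∀ m : ℕ, ‖a₂ m‖ ≤ w₂ m := by
      intro m
      rw [ha₂, hw₂]
      simp only
      by_cases hc : M ≤ (m:ℝ)+1 ∧ (m:ℝ)+1 ≤ 2*M
      · rw [if_pos hc, norm_mul, Complex.norm_real, Real.norm_eq_abs]
        have hx1 : (1:ℝ) ≤ (m:ℝ)+1 := by
          have := Nat.cast_nonneg (α := ℝ) m
          linarith
        have hcp : ‖((m+1:ℕ):ℂ) ^ (-(1/2:ℂ) - u)‖
            = ((m:ℝ)+1) ^ ((-(1/2:ℂ) - u).re) := by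
          rw [show ((m+1:ℕ):ℂ) = ((((m:ℝ)+1):ℝ):ℂ) by push_cast; ring]
          exact Complex.norm_cpow_eq_rpow_re_of_pos (by positivity) _
        rw [hcp]
        have hre : (-(1/2:ℂ) - u).re = -(1/2) - ε := by
          rw [Complex.sub_re, hure]
          norm_num
        rw [hre]
        have h1 : ((m:ℝ)+1) ^ (-(1/2) - ε) ≤ ((m:ℝ)+1) ^ (-(1/2):ℝ) :=
          Real.rpow_le_rpow_of_exponent_le hx1 (by linarith)
        calc ((m:ℝ)+1) ^ (-(1/2) - ε) * |V₁ (((m:ℝ)+1) / M)|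
            ≤ ((m:ℝ)+1) ^ (-(1/2):ℝ) * B := by
              apply mul_le_mul h1 (hB _) (abs_nonneg _) (by positivity)
          _ = B * ((m:ℝ)+1) ^ (-(1/2):ℝ) := by ring
      · rw [if_neg hc]
        have hx : ((m:ℝ)+1)/M ∉ Set.Icc (1:ℝ) 2 := by
          intro hmem
          apply hc
          constructor
          · have := hmem.1
            rw [le_div_iff₀ hM0] at this
            linarith
          · have := hmem.2
            rw [div_le_iff₀ hM0] at this
            linarith
        rw [hV₁supp _ hx]
        simp
    have hsupp₂ : ∀ m : ℕ, w₂ m ≠ 0 → M ≤ (m:ℝ)+1 ∧ (m:ℝ)+1 ≤ 2*M := by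
      intro m h
      rw [hw₂] at h
      simp only at h
      by_cases hc : M ≤ (m:ℝ)+1 ∧ (m:ℝ)+1 ≤ 2*M
      · exact hc
      · rw [if_neg hc] at h
        exact absurd rfl h
    have hW₂ : ∑ m ∈ Finset.range ⌊2*M⌋₊, (w₂ m)^2 ≤ 2*B^2 := by
      have hterm : ∀ m ∈ Finset.range ⌊2*M⌋₊, (w₂ m)^2 ≤ B^2/M := by
        intro m _
        rw [hw₂]
        simp only
        by_cases hc : M ≤ (m:ℝ)+1 ∧ (m:ℝ)+1 ≤ 2*M
        · rw [if_pos hc]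
          have hx0 : (0:ℝ) < (m:ℝ)+1 := by positivity
          have hrp : ((((m:ℝ)+1)) ^ (-(1/2):ℝ))^2 = (((m:ℝ)+1))⁻¹ := by
            rw [← Real.rpow_natCast ((((m:ℝ)+1)) ^ (-(1/2):ℝ)) 2,
              ← Real.rpow_mul hx0.le]
            norm_num
            exact Real.rpow_neg_one _
          calc (B * (((m:ℝ)+1)) ^ (-(1/2):ℝ))^2
              = B^2 * ((((m:ℝ)+1)) ^ (-(1/2):ℝ))^2 := by rw [mul_pow]
            _ = B^2 * (((m:ℝ)+1))⁻¹ := by rw [hrp]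
            _ ≤ B^2 * M⁻¹ := by
                apply mul_le_mul_of_nonneg_left (inv_anti₀ hM0 hc.1) (by positivity)
            _ = B^2/M := by ring
        · rw [if_neg hc, zero_pow two_ne_zero]
          positivity
      calc ∑ m ∈ Finset.range ⌊2*M⌋₊, (w₂ m)^2
          ≤ ∑ _m ∈ Finset.range ⌊2*M⌋₊, B^2/M := Finset.sum_le_sum hterm
        _ = (⌊2*M⌋₊ : ℝ) * (B^2/M) := by rw [Finset.sum_const, Finset.card_range, nsmul_eq_mul]
        _ ≤ (2*M) * (B^2/M) := by
            apply mul_le_mul_of_nonneg_right (Nat.floor_le (by positivity)) (by positivity)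
        _ = 2*B^2 := by field_simp
    have key := L2_final ⌊2*M⌋₊ a₂ w₂ 1 M T (Or.inl rfl) hT0.le hM1 hwa₂ hsupp₂ hW₂
    have hMle' : M ≤ T^(1+ε) :=
      le_trans hMle (Real.rpow_le_rpow_of_exponent_le hT1 (by linarith))
    calc ∫ t in Set.Icc T (2*T), ‖S₂ t‖^2 = ∫ t in T..(2*T), ‖S₂ t‖^2 := hicc _
      _ ≤ (2*B^2)*T + 8*M*(1+Real.log ⌊2*M⌋₊)*(2*B^2) := by
          simp only [hS₂]
          exact key
      _ ≤ (2*B^2)*(1+80/δ) * T^(1+ε+δ/2) := by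
          have := hnum (2*B^2) M ⌊2*M⌋₊ (by positivity) hM1
            (le_trans (Nat.floor_le (by positivity)) le_rfl) hMle'
          linarith [this]
  -- pointwise bound and assembly
  have habs_int : ‖∫ t : ℝ, (V (t / T) : ℂ) * S₁ t * S₂ t * (t : ℂ) ^ (3 * u / 2)‖
      ≤ (A 0 * (3*T^((3/2)*ε))/2) *
        ((∫ t in Set.Icc T (2*T), ‖S₁ t‖^2) + ∫ t in Set.Icc T (2*T), ‖S₂ t‖^2) := by
    have hzero : ∀ t ∉ Set.Icc T (2*T),
        ‖(V (t / T) : ℂ) * S₁ t * S₂ t * (t : ℂ) ^ (3 * u / 2)‖ = 0 := by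
      intro t ht
      have hV0 : V (t/T) = 0 := by
        apply hVsupp
        intro hmem
        apply ht
        constructor
        · have := hmem.1
          rw [le_div_iff₀ hT0] at this
          linarith
        · have := hmem.2
          rw [div_le_iff₀ hT0] at this
          linarith
      simp [hV0]
    have hptwise : ∀ t ∈ Set.Icc T (2*T),
        ‖(V (t / T) : ℂ) * S₁ t * S₂ t * (t : ℂ) ^ (3 * u / 2)‖
          ≤ (A 0 * (3*T^((3/2)*ε))/2) * (‖S₁ t‖^2 + ‖S₂ t‖^2) := by
      intro t ht
      have htpos : 0 < t := lt_of_lt_of_le hT0 ht.1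
      have h4 : ‖(t:ℂ)^(3*u/2)‖ ≤ 3*T^((3/2)*ε) := by
        rw [Complex.norm_cpow_eq_rpow_re_of_pos htpos]
        have hre : (3*u/2).re = (3/2)*ε := by
          rw [show (3:ℂ)*u/2 = (((3:ℝ)/2:ℝ):ℂ)*u by push_cast; ring,
            Complex.re_ofReal_mul, hure]
        rw [hre]
        calc t^((3/2)*ε) ≤ (2*T)^((3/2)*ε) :=
              Real.rpow_le_rpow htpos.le ht.2 (by positivity)
          _ = 2^((3/2)*ε) * T^((3/2)*ε) := Real.mul_rpow (by norm_num) hT0.le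
          _ ≤ 3 * T^((3/2)*ε) := by
              apply mul_le_mul_of_nonneg_right ?_ (Real.rpow_nonneg hT0.le _)
              have h23 : (2:ℝ)^((3/2)*ε) ≤ 2^((3:ℝ)/2) :=
                Real.rpow_le_rpow_of_exponent_le (by norm_num) (by linarith)
              have h232 : ((2:ℝ)^((3:ℝ)/2))^2 = 8 := by
                rw [← Real.rpow_natCast ((2:ℝ)^((3:ℝ)/2)) 2,
                  ← Real.rpow_mul (by norm_num)]
                norm_num
              nlinarith [Real.rpow_nonneg (show (0:ℝ) ≤ 2 by norm_num) ((3:ℝ)/2),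
                Real.rpow_nonneg (show (0:ℝ) ≤ 2 by norm_num) ((3/2)*ε)]
      have h1 : ‖((V (t/T) : ℝ):ℂ)‖ ≤ A 0 := by
        rw [Complex.norm_real, Real.norm_eq_abs]
        exact hA0 _
      have h23' : ‖S₁ t‖*‖S₂ t‖ ≤ (‖S₁ t‖^2+‖S₂ t‖^2)/2 := by
        nlinarith [sq_nonneg (‖S₁ t‖-‖S₂ t‖)]
      calc ‖(V (t / T) : ℂ) * S₁ t * S₂ t * (t : ℂ) ^ (3 * u / 2)‖
          = ‖((V (t/T):ℝ):ℂ)‖*‖S₁ t‖*‖S₂ t‖*‖(t:ℂ)^(3*u/2)‖ := by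
            rw [norm_mul, norm_mul, norm_mul]
        _ = (‖S₁ t‖*‖S₂ t‖)*(‖((V (t/T):ℝ):ℂ)‖*‖(t:ℂ)^(3*u/2)‖) := by ring
        _ ≤ ((‖S₁ t‖^2+‖S₂ t‖^2)/2)*((A 0)*(3*T^((3/2)*ε))) := by
            apply mul_le_mul h23' (mul_le_mul h1 h4 (norm_nonneg _) hA0n)
              (by positivity) (by positivity)
        _ = (A 0*(3*T^((3/2)*ε))/2)*(‖S₁ t‖^2+‖S₂ t‖^2) := by ring
    have hintf : IntegrableOn
        (fun t : ℝ => ‖(V (t / T) : ℂ) * S₁ t * S₂ t * (t : ℂ) ^ (3 * u / 2)‖)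
        (Set.Icc T (2*T)) := hGc.norm.integrableOn_Icc
    have hintS : Continuous (fun t : ℝ => ‖S₁ t‖^2 + ‖S₂ t‖^2) :=
      (hS₁c.norm.pow 2).add (hS₂c.norm.pow 2)
    have hintg : IntegrableOn
        (fun t : ℝ => (A 0 * (3*T^((3/2)*ε))/2) * (‖S₁ t‖^2 + ‖S₂ t‖^2))
        (Set.Icc T (2*T)) := (continuous_const.mul hintS).integrableOn_Icc
    calc ‖∫ t : ℝ, (V (t / T) : ℂ) * S₁ t * S₂ t * (t : ℂ) ^ (3 * u / 2)‖
        = ‖∫ t : ℝ, (V (t / T) : ℂ) * S₁ t * S₂ t * (t : ℂ) ^ (3 * u / 2)‖ :=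
          rfl
      _ ≤ ∫ t : ℝ, ‖(V (t / T) : ℂ) * S₁ t * S₂ t * (t : ℂ) ^ (3 * u / 2)‖ :=
          norm_integral_le_integral_norm _
      _ = ∫ t in Set.Icc T (2*T), ‖(V (t / T) : ℂ) * S₁ t * S₂ t * (t : ℂ) ^ (3 * u / 2)‖ :=
          (setIntegral_eq_integral_of_forall_compl_eq_zero hzero).symm
      _ ≤ ∫ t in Set.Icc T (2*T), (A 0 * (3*T^((3/2)*ε))/2) * (‖S₁ t‖^2 + ‖S₂ t‖^2) :=
          setIntegral_mono_on hintf hintg measurableSet_Icc hptwise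
      _ = (A 0 * (3*T^((3/2)*ε))/2) *
          ((∫ t in Set.Icc T (2*T), ‖S₁ t‖^2) + ∫ t in Set.Icc T (2*T), ‖S₂ t‖^2) := by
          rw [integral_const_mul, integral_add (f := fun t => ‖S₁ t‖^2) (g := fun t => ‖S₂ t‖^2)
            (by exact (hS₁c.norm.pow 2).integrableOn_Icc) (by exact (hS₂c.norm.pow 2).integrableOn_Icc)]
  -- final numeric assembly
  calc T ^ (-(3:ℝ)/4) *
        ‖∫ t : ℝ, (V (t / T) : ℂ) * S₁ t * S₂ t * (t : ℂ) ^ (3 * u / 2)‖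
      ≤ T ^ (-(3:ℝ)/4) * ((A 0 * (3*T^((3/2)*ε))/2) *
          ((2*C₀*B^2)*(1+80/δ)*T^(1+ε+δ/2) + (2*B^2)*(1+80/δ)*T^(1+ε+δ/2))) := by
        apply mul_le_mul_of_nonneg_left ?_ (Real.rpow_nonneg hT0.le _)
        exact le_trans habs_int
          (mul_le_mul_of_nonneg_left (add_le_add hI₁ hI₂) (by positivity))
    _ = (3/2)*(A 0)*((2*C₀*B^2+2*B^2)*(1+80/δ))
        * (T^(-(3:ℝ)/4) * T^((3/2)*ε) * T^(1+ε+δ/2)) := by ring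
    _ = (3/2)*(A 0)*((2*C₀*B^2+2*B^2)*(1+80/δ)) * T^(-(3:ℝ)/4 + (3/2)*ε + (1+ε+δ/2)) := by
        rw [Real.rpow_add hT0 (-(3:ℝ)/4 + (3/2)*ε), Real.rpow_add hT0 (-(3:ℝ)/4)]
    _ ≤ 3*(|A 0|+1)*((2*C₀*B^2 + 2*B^2)*(1+80/δ)) * T^(1/4+δ) := by
        have hX : (0:ℝ) ≤ (2*C₀*B^2+2*B^2)*(1+80/δ) := by positivity
        have hexp : T^(-(3:ℝ)/4 + (3/2)*ε + (1+ε+δ/2)) ≤ T^(1/4+δ) :=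
          Real.rpow_le_rpow_of_exponent_le hT1 (by linarith)
        have hc1 : (3/2)*(A 0)*((2*C₀*B^2+2*B^2)*(1+80/δ))
            ≤ 3*(|A 0|+1)*((2*C₀*B^2 + 2*B^2)*(1+80/δ)) := by
          apply mul_le_mul_of_nonneg_right ?_ hX
          nlinarith [le_abs_self (A 0), abs_nonneg (A 0)]
        apply mul_le_mul hc1 hexp (Real.rpow_nonneg hT0.le _)
        positivity
end Main
end
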